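/- arXiv:math/0408418 — 4 statements merged into one kernel-verified Lean document; each statement's English description precedes it below -/
import Mathlib

section
/- For λ > 0 and a partition Δ of [a,b], the 'hat' exponential B-splines N_i ∈ 𝕊(D²−λ², Δ) defined by N_i(t_j) = δ_{ij} and N_i supported on [t_{i−1}, t_{i+1}] exist, are unique, are nonnegative on [a,b], and satisfy 0 ≤ N_i(x) ≤ 1 for all x ∈ [a,b]. -/
/-!
Let `f x = sinh (λ (x - t (i-1))) / sinh (λ (t i - t (i-1)))` be the increasing ramp from `0` at
`t (i-1)` to `1` at `t i`, and `g` the decreasing ramp from `1` at `t i` to `0` at `t (i+1)`. Then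
`N_i = max 0 (min f g)`: since `f ≤ 1 ≤ g` left of `t i` and `g ≤ 1 ≤ f` right of it, this gives
the spline pieces, the support and the bounds `0 ≤ N_i ≤ 1` at once. Uniqueness holds because
`A e^{λx} + B e^{-λx}` vanishing at two distinct points forces `A = B = 0`, so a spline is
determined by its values at the knots.
-/

/-- `s` is an exponential `L`-spline for `L = D² − λ²` on the partition
`t 0 < t 1 < ⋯ < t n`: continuous on `[t 0, t n]` and on each subinterval a linear
combination of `exp (λ x)` and `exp (−λ x)`. -/
def IsExpSpline (l : ℝ) (n : ℕ) (t : ℕ → ℝ) (s : ℝ → ℝ) : Prop :=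
  ContinuousOn s (Set.Icc (t 0) (t n)) ∧
  ∀ i < n, ∃ A B : ℝ, ∀ x ∈ Set.Icc (t i) (t (i + 1)),
    s x = A * Real.exp (l * x) + B * Real.exp (-l * x)

/-- `N` is the `i`-th "hat" exponential B-spline: the spline with `N (t j) = δ_{i j}`
supported (within `[a, b] = [t 0, t n]`) on `[t (i−1), t (i+1)] ∩ [a, b]`. -/
def IsExpHat (l : ℝ) (n : ℕ) (t : ℕ → ℝ) (i : ℕ) (N : ℝ → ℝ) : Prop :=
  IsExpSpline l n t N ∧
  (∀ j ≤ n, N (t j) = if i = j then 1 else 0) ∧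
  (∀ x ∈ Set.Icc (t 0) (t n), x ∉ Set.Icc (t (i - 1)) (t (min (i + 1) n)) → N x = 0)

open Set Real

theorem expCombination_eq_zero_of_eq_zero_of_eq_zero {l p q A B : ℝ} (hl : l ≠ 0)
    (hpq : p ≠ q) (hp : A * exp (l * p) + B * exp (-l * p) = 0)
    (hq : A * exp (l * q) + B * exp (-l * q) = 0) : A = 0 ∧ B = 0 := by
  have key : ∀ x, A * exp (l * x) + B * exp (-l * x) = 0 → A * exp (2 * l * x) + B = 0 := by
    intro x hx
    have e1 : exp (l * x) * exp (l * x) = exp (2 * l * x) := by rw [← exp_add]; ring_nf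
    have e2 : exp (l * x) * exp (-l * x) = 1 := by rw [← exp_add]; ring_nf; exact exp_zero
    linear_combination exp (l * x) * hx - A * e1 - B * e2
  have hp' := key p hp
  have hq' := key q hq
  have hexp : exp (2 * l * p) ≠ exp (2 * l * q) := by
    rw [Ne, exp_eq_exp, mul_right_inj' (mul_ne_zero two_ne_zero hl)]
    exact hpq
  have hA : A = 0 := by
    have : A * (exp (2 * l * p) - exp (2 * l * q)) = 0 := by linear_combination hp' - hq'
    simpa [sub_ne_zero.2 hexp] using this
  refine ⟨hA, ?_⟩
  simpa [hA] using hp'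

noncomputable def sinhRamp (l p q x : ℝ) : ℝ :=
  sinh (l * (x - p)) / sinh (l * (q - p))

theorem sinhRamp_left (l p q : ℝ) : sinhRamp l p q p = 0 := by
  simp [sinhRamp]

theorem sinhRamp_right {l p q : ℝ} (hl : l ≠ 0) (hpq : p ≠ q) : sinhRamp l p q q = 1 :=
  div_self (sinh_ne_zero.2 (mul_ne_zero hl (sub_ne_zero.2 hpq.symm)))

theorem sinhRamp_neg (l p q x : ℝ) : sinhRamp l (-p) (-q) (-x) = sinhRamp l p q x := by
  simp only [sinhRamp, show ∀ u v : ℝ, l * (-u - -v) = -(l * (u - v)) by intros; ring, sinh_neg,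
    neg_div_neg_eq]

theorem continuous_sinhRamp (l p q : ℝ) : Continuous (sinhRamp l p q) := by
  unfold sinhRamp
  fun_prop

theorem monotone_sinhRamp {l p q : ℝ} (hl : 0 < l) (hpq : p < q) : Monotone (sinhRamp l p q) := by
  intro x y hxy
  have hden : 0 < sinh (l * (q - p)) := sinh_pos_iff.2 (mul_pos hl (sub_pos.2 hpq))
  exact div_le_div_of_nonneg_right (sinh_le_sinh.2 (by nlinarith)) hden.le

theorem antitone_sinhRamp {l p q : ℝ} (hl : 0 < l) (hqp : q < p) : Antitone (sinhRamp l p q) := by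
  intro x y hxy
  rw [← sinhRamp_neg l p q x, ← sinhRamp_neg l p q y]
  exact monotone_sinhRamp hl (neg_lt_neg hqp) (neg_le_neg hxy)

theorem sinhRamp_eq_expCombination (l p q : ℝ) :
    ∃ A B : ℝ, ∀ x, sinhRamp l p q x = A * exp (l * x) + B * exp (-l * x) := by
  refine ⟨exp (-(l * p)) / (2 * sinh (l * (q - p))), -exp (l * p) / (2 * sinh (l * (q - p))),
    fun x => ?_⟩
  have h1 : exp (l * (x - p)) = exp (l * x) * exp (-(l * p)) := by rw [← exp_add]; ring_nf
  have h2 : exp (-(l * (x - p))) = exp (-l * x) * exp (l * p) := by rw [← exp_add]; ring_nf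
  rw [sinhRamp, sinh_eq, h1, h2]
  ring

noncomputable def sinhTent (l p c q x : ℝ) : ℝ :=
  max 0 (min (sinhRamp l p c x) (sinhRamp l q c x))

section SinhTent

variable {l p c q x : ℝ}

theorem sinhTent_eq_left (hl : 0 < l) (hpc : p < c) (hcq : c < q) (hx : x ∈ Icc p c) :
    sinhTent l p c q x = sinhRamp l p c x := by
  have hf0 : 0 ≤ sinhRamp l p c x := by
    simpa [sinhRamp_left] using monotone_sinhRamp hl hpc hx.1
  have hf1 : sinhRamp l p c x ≤ 1 := by
    simpa [sinhRamp_right hl.ne' hpc.ne] using monotone_sinhRamp hl hpc hx.2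
  have hg1 : 1 ≤ sinhRamp l q c x := by
    simpa [sinhRamp_right hl.ne' hcq.ne'] using antitone_sinhRamp hl hcq hx.2
  rw [sinhTent, min_eq_left (hf1.trans hg1), max_eq_right hf0]

theorem sinhTent_eq_right (hl : 0 < l) (hpc : p < c) (hcq : c < q) (hx : x ∈ Icc c q) :
    sinhTent l p c q x = sinhRamp l q c x := by
  have hg0 : 0 ≤ sinhRamp l q c x := by
    simpa [sinhRamp_left] using antitone_sinhRamp hl hcq hx.2
  have hg1 : sinhRamp l q c x ≤ 1 := by
    simpa [sinhRamp_right hl.ne' hcq.ne'] using antitone_sinhRamp hl hcq hx.1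
  have hf1 : 1 ≤ sinhRamp l p c x := by
    simpa [sinhRamp_right hl.ne' hpc.ne] using monotone_sinhRamp hl hpc hx.1
  rw [sinhTent, min_eq_right (hg1.trans hf1), max_eq_right hg0]

theorem sinhTent_center (hl : 0 < l) (hpc : p < c) (hcq : c < q) : sinhTent l p c q c = 1 := by
  rw [sinhTent_eq_left hl hpc hcq ⟨hpc.le, le_rfl⟩, sinhRamp_right hl.ne' hpc.ne]

theorem sinhTent_eq_zero_of_le (hl : 0 < l) (hpc : p < c) (hx : x ≤ p) :
    sinhTent l p c q x = 0 := by
  have hf : sinhRamp l p c x ≤ 0 := by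
    simpa [sinhRamp_left] using monotone_sinhRamp hl hpc hx
  exact max_eq_left ((min_le_left _ _).trans hf)

theorem sinhTent_eq_zero_of_ge (hl : 0 < l) (hcq : c < q) (hx : q ≤ x) :
    sinhTent l p c q x = 0 := by
  have hg : sinhRamp l q c x ≤ 0 := by
    simpa [sinhRamp_left] using antitone_sinhRamp hl hcq hx
  exact max_eq_left ((min_le_right _ _).trans hg)

theorem sinhTent_mem_Icc (hl : 0 < l) (hpc : p < c) (hcq : c < q) :
    sinhTent l p c q x ∈ Icc 0 1 := by
  refine ⟨le_max_left _ _, max_le zero_le_one ?_⟩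
  rcases le_total x c with hxc | hxc
  · simpa [sinhRamp_right hl.ne' hpc.ne] using
      (min_le_left _ _).trans (monotone_sinhRamp hl hpc hxc)
  · simpa [sinhRamp_right hl.ne' hcq.ne'] using
      (min_le_right _ _).trans (antitone_sinhRamp hl hcq hxc)

end SinhTent

theorem continuous_sinhTent (l p c q : ℝ) : Continuous (sinhTent l p c q) :=
  continuous_const.max ((continuous_sinhRamp l p c).min (continuous_sinhRamp l q c))

section Knots

variable {n i j : ℕ} {t : ℕ → ℝ}

/- At the ends of the partition the missing neighbour is replaced by a point outside
`[t 0, t n]`; only the restriction of the hat to `[t 0, t n]` matters. -/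

noncomputable def prevKnot (t : ℕ → ℝ) (i : ℕ) : ℝ :=
  if i = 0 then t 0 - 1 else t (i - 1)

noncomputable def nextKnot (n : ℕ) (t : ℕ → ℝ) (i : ℕ) : ℝ :=
  if i = n then t n + 1 else t (i + 1)

theorem prevKnot_succ (t : ℕ → ℝ) (j : ℕ) : prevKnot t (j + 1) = t j := by
  simp [prevKnot]

theorem nextKnot_of_lt (hi : i < n) : nextKnot n t i = t (i + 1) :=
  if_neg hi.ne

theorem prevKnot_lt (ht : StrictMonoOn t (Iic n)) (hi : i ≤ n) : prevKnot t i < t i := by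
  unfold prevKnot
  split_ifs with h
  · subst h; linarith
  · exact ht (mem_Iic.2 (by omega)) (mem_Iic.2 hi) (by omega)

theorem lt_nextKnot (ht : StrictMonoOn t (Iic n)) (hi : i ≤ n) : t i < nextKnot n t i := by
  unfold nextKnot
  split_ifs with h
  · subst h; linarith
  · exact ht (mem_Iic.2 hi) (mem_Iic.2 (by omega)) (by omega)

theorem le_prevKnot (ht : StrictMonoOn t (Iic n)) (hji : j < i) (hi : i ≤ n) :
    t j ≤ prevKnot t i := by
  rw [prevKnot, if_neg (by omega)]
  exact ht.monotoneOn (mem_Iic.2 (by omega)) (mem_Iic.2 (by omega)) (by omega)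

theorem nextKnot_le (ht : StrictMonoOn t (Iic n)) (hij : i < j) (hj : j ≤ n) :
    nextKnot n t i ≤ t j := by
  rw [nextKnot_of_lt (by omega)]
  exact ht.monotoneOn (mem_Iic.2 (by omega)) (mem_Iic.2 hj) (by omega)

end Knots

noncomputable def expHat (l : ℝ) (n : ℕ) (t : ℕ → ℝ) (i : ℕ) : ℝ → ℝ :=
  sinhTent l (prevKnot t i) (t i) (nextKnot n t i)

section ExpHat

variable {l : ℝ} {n i : ℕ} {t : ℕ → ℝ}

theorem isExpSpline_expHat (hl : 0 < l) (ht : StrictMonoOn t (Iic n)) (hi : i ≤ n) :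
    IsExpSpline l n t (expHat l n t i) := by
  have hp := prevKnot_lt ht hi
  have hq := lt_nextKnot ht hi
  refine ⟨(continuous_sinhTent _ _ _ _).continuousOn, fun j hj => ?_⟩
  rcases lt_trichotomy (j + 1) i with hji | rfl | hij
  · refine ⟨0, 0, fun x hx => ?_⟩
    rw [expHat, sinhTent_eq_zero_of_le hl hp (hx.2.trans (le_prevKnot ht hji hi))]
    ring
  · obtain ⟨A, B, hAB⟩ := sinhRamp_eq_expCombination l (t j) (t (j + 1))
    refine ⟨A, B, fun x hx => ?_⟩
    rw [expHat, sinhTent_eq_left hl hp hq (by rwa [prevKnot_succ]), prevKnot_succ, hAB]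
  · rcases (Nat.lt_succ_iff.1 hij).eq_or_lt with rfl | hij
    · obtain ⟨A, B, hAB⟩ := sinhRamp_eq_expCombination l (t (i + 1)) (t i)
      refine ⟨A, B, fun x hx => ?_⟩
      rw [expHat, sinhTent_eq_right hl hp hq (by rwa [nextKnot_of_lt hj]), nextKnot_of_lt hj,
        hAB]
    · refine ⟨0, 0, fun x hx => ?_⟩
      rw [expHat, sinhTent_eq_zero_of_ge hl hq ((nextKnot_le ht hij hj.le).trans hx.1)]
      ring

theorem expHat_apply_knot (hl : 0 < l) (ht : StrictMonoOn t (Iic n)) (hi : i ≤ n) {j : ℕ}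
    (hj : j ≤ n) : expHat l n t i (t j) = if i = j then 1 else 0 := by
  have hp := prevKnot_lt ht hi
  have hq := lt_nextKnot ht hi
  split_ifs with hij
  · subst hij
    exact sinhTent_center hl hp hq
  · rcases lt_or_gt_of_ne hij with h | h
    · exact sinhTent_eq_zero_of_ge hl hq (nextKnot_le ht h hj)
    · exact sinhTent_eq_zero_of_le hl hp (le_prevKnot ht h hi)

theorem expHat_eq_zero_of_notMem (hl : 0 < l) (ht : StrictMonoOn t (Iic n)) (hi : i ≤ n)
    {x : ℝ} (hx : x ∈ Icc (t 0) (t n)) (hxi : x ∉ Icc (t (i - 1)) (t (min (i + 1) n))) :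
    expHat l n t i x = 0 := by
  rw [mem_Icc, not_and_or, not_le, not_le] at hxi
  rcases hxi with h | h
  · have hi0 : i ≠ 0 := by
      rintro rfl
      exact h.not_ge hx.1
    rw [expHat, sinhTent_eq_zero_of_le hl (prevKnot_lt ht hi)]
    rw [prevKnot, if_neg hi0]
    exact h.le
  · have hin : i < n := by
      by_contra! hin
      rw [min_eq_right (by omega)] at h
      exact h.not_ge hx.2
    rw [min_eq_left (by omega)] at h
    rw [expHat, sinhTent_eq_zero_of_ge hl (lt_nextKnot ht hi)]
    rw [nextKnot_of_lt hin]
    exact h.le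

theorem isExpHat_expHat (hl : 0 < l) (ht : StrictMonoOn t (Iic n)) (hi : i ≤ n) :
    IsExpHat l n t i (expHat l n t i) :=
  ⟨isExpSpline_expHat hl ht hi, fun _ hj => expHat_apply_knot hl ht hi hj,
    fun _ hx hxi => expHat_eq_zero_of_notMem hl ht hi hx hxi⟩

end ExpHat

theorem exists_mem_Icc_succ_of_mem_Icc {α : Type*} [LinearOrder α] (t : ℕ → α) {n : ℕ}
    (hn : n ≠ 0) {x : α} (hx : x ∈ Icc (t 0) (t n)) : ∃ j < n, x ∈ Icc (t j) (t (j + 1)) := by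
  induction n with
  | zero => exact absurd rfl hn
  | succ m ih =>
    rcases le_or_gt x (t m) with hxm | hxm
    · rcases eq_or_ne m 0 with rfl | hm
      · exact ⟨0, by omega, hx⟩
      · obtain ⟨j, hj, hxj⟩ := ih hm ⟨hx.1, hxm⟩
        exact ⟨j, by omega, hxj⟩
    · exact ⟨m, by omega, hxm.le, hx.2⟩

theorem IsExpSpline.eqOn_of_eq_at_knots {l : ℝ} {n : ℕ} {t : ℕ → ℝ} {s s' : ℝ → ℝ}
    (hl : l ≠ 0) (ht : ∀ i < n, t i < t (i + 1)) (hs : IsExpSpline l n t s)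
    (hs' : IsExpSpline l n t s') (hknots : ∀ j ≤ n, s (t j) = s' (t j)) :
    EqOn s s' (Icc (t 0) (t n)) := by
  intro x hx
  rcases eq_or_ne n 0 with rfl | hn
  · rw [hx.1.antisymm' hx.2]
    exact hknots 0 le_rfl
  obtain ⟨j, hj, hxj⟩ := exists_mem_Icc_succ_of_mem_Icc t hn hx
  obtain ⟨A, B, hAB⟩ := hs.2 j hj
  obtain ⟨A', B', hAB'⟩ := hs'.2 j hj
  have hdiff : ∀ y ∈ Icc (t j) (t (j + 1)), s y = s' y →
      (A - A') * exp (l * y) + (B - B') * exp (-l * y) = 0 := by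
    intro y hy hsy
    rw [hAB y hy, hAB' y hy] at hsy
    linear_combination hsy
  obtain ⟨hA, hB⟩ := expCombination_eq_zero_of_eq_zero_of_eq_zero hl (ht j hj).ne
    (hdiff _ (left_mem_Icc.2 (ht j hj).le) (hknots j hj.le))
    (hdiff _ (right_mem_Icc.2 (ht j hj).le) (hknots (j + 1) hj))
  rw [hAB x hxj, hAB' x hxj, sub_eq_zero.1 hA, sub_eq_zero.1 hB]

theorem expHat_exists_unique_nonneg_general (a b l : ℝ) (hl : 0 < l)
    (n : ℕ) (t : ℕ → ℝ) (hmono : ∀ i < n, t i < t (i + 1))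
    (h0 : t 0 = a) (hb : t n = b) :
    ∀ i ≤ n, ∃ N : ℝ → ℝ, IsExpHat l n t i N ∧
      (∀ x ∈ Set.Icc a b, 0 ≤ N x ∧ N x ≤ 1) ∧
      (∀ N' : ℝ → ℝ, IsExpHat l n t i N' → ∀ x ∈ Set.Icc a b, N' x = N x) := by
  subst h0 hb
  have ht : StrictMonoOn t (Iic n) := strictMonoOn_Iic_of_lt_succ hmono
  intro i hi
  have hN := isExpHat_expHat hl ht hi
  refine ⟨expHat l n t i, hN,
    fun x _ => sinhTent_mem_Icc hl (prevKnot_lt ht hi) (lt_nextKnot ht hi), fun N' hN' => ?_⟩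
  exact hN'.1.eqOn_of_eq_at_knots hl.ne' hmono hN.1 fun j hj =>
    (hN'.2.1 j hj).trans (hN.2.1 j hj).symm

/-- The hat exponential B-splines exist, are unique (as functions on `[a, b]`),
and satisfy `0 ≤ N_i(x) ≤ 1` on `[a, b]`. -/
theorem expHat_exists_unique_nonneg (a b l : ℝ) (hab : a < b) (hl : 0 < l)
    (n : ℕ) (hn : 1 ≤ n) (t : ℕ → ℝ) (hmono : ∀ i < n, t i < t (i + 1))
    (h0 : t 0 = a) (hb : t n = b) :
    ∀ i ≤ n, ∃ N : ℝ → ℝ, IsExpHat l n t i N ∧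
      (∀ x ∈ Set.Icc a b, 0 ≤ N x ∧ N x ≤ 1) ∧
      (∀ N' : ℝ → ℝ, IsExpHat l n t i N' → ∀ x ∈ Set.Icc a b, N' x = N x) :=
  expHat_exists_unique_nonneg_general a b l hl n t hmono h0 hb
end

section
/- For λ > 0 and a partition Δ with λ·d(Δ) < π, the 'hat' trigonometric B-splines N_i ∈ 𝕊(D²+λ², Δ) with N_i(t_j) = δ_{ij} and N_i supported on [t_{i−1}, t_{i+1}] exist, are unique, and are nonnegative on [a,b]. -/
/-- `s` is a trigonometric `L`-spline for `L = D² + λ²` on the partition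
`t 0 < t 1 < ⋯ < t n`: continuous on `[t 0, t n]` and on each subinterval a linear
combination of `sin (λ x)` and `cos (λ x)`. -/
def IsTrigSpline (l : ℝ) (n : ℕ) (t : ℕ → ℝ) (s : ℝ → ℝ) : Prop :=
  ContinuousOn s (Set.Icc (t 0) (t n)) ∧
  ∀ i < n, ∃ A B : ℝ, ∀ x ∈ Set.Icc (t i) (t (i + 1)),
    s x = A * Real.sin (l * x) + B * Real.cos (l * x)

/-- `N` is the `i`-th "hat" trigonometric B-spline: the spline with `N (t j) = δ_{i j}`
supported (within `[a, b] = [t 0, t n]`) on `[t (i−1), t (i+1)] ∩ [a, b]`. -/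
def IsTrigHat (l : ℝ) (n : ℕ) (t : ℕ → ℝ) (i : ℕ) (N : ℝ → ℝ) : Prop :=
  IsTrigSpline l n t N ∧
  (∀ j ≤ n, N (t j) = if i = j then 1 else 0) ∧
  (∀ x ∈ Set.Icc (t 0) (t n), x ∉ Set.Icc (t (i - 1)) (t (min (i + 1) n)) → N x = 0)

/-!
On a cell `[u, v]` a combination `A sin λx + B cos λx` is determined by its values at `u` and
`v`, since the determinant of this 2×2 system is `sin λ(v − u)`, which is nonzero when
`0 < λ(v − u) < π`; this gives uniqueness. For existence, the hat is glued from the ramps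
`sin λ(x − u) / sin λ(v − u)`, which vanish at `u`, equal `1` at `v`, and are nonnegative
between `u` and `v` because numerator and denominator have the same sign when `λ|v − u| < π`.
-/

open Real Set

section Ramp

variable {l u v w x : ℝ}

lemma sin_cos_coeff_eq_zero_of_two_zeros {A B : ℝ} (h : sin (l * (v - u)) ≠ 0)
    (hu : A * sin (l * u) + B * cos (l * u) = 0) (hv : A * sin (l * v) + B * cos (l * v) = 0) :
    A = 0 ∧ B = 0 := by
  have hdet : sin (l * (v - u)) = sin (l * v) * cos (l * u) - cos (l * v) * sin (l * u) := by
    rw [mul_sub, sin_sub]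
  refine ⟨(mul_eq_zero.1 ?_).resolve_right h, (mul_eq_zero.1 ?_).resolve_right h⟩
  · rw [hdet]; linear_combination cos (l * u) * hv - cos (l * v) * hu
  · rw [hdet]; linear_combination sin (l * v) * hu - sin (l * u) * hv

noncomputable def trigRamp (l u v x : ℝ) : ℝ := sin (l * (x - u)) / sin (l * (v - u))

lemma trigRamp_left : trigRamp l u v u = 0 := by simp [trigRamp]

lemma trigRamp_right (h : sin (l * (v - u)) ≠ 0) : trigRamp l u v v = 1 := div_self h

lemma exists_trigRamp_eq (l u v : ℝ) :
    ∃ A B : ℝ, ∀ x, trigRamp l u v x = A * sin (l * x) + B * cos (l * x) :=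
  ⟨cos (l * u) / sin (l * (v - u)), -sin (l * u) / sin (l * (v - u)), fun x => by
    rw [trigRamp, mul_sub, sin_sub]; ring⟩

lemma trigRamp_nonneg (hl : 0 < l) (hx : x ∈ Icc u v) (h : l * (v - u) < π) :
    0 ≤ trigRamp l u v x :=
  div_nonneg (sin_nonneg_of_nonneg_of_le_pi (by nlinarith [hx.1]) (by nlinarith [hx.2]))
    (sin_nonneg_of_nonneg_of_le_pi (by nlinarith [hx.1, hx.2]) h.le)

lemma trigRamp_nonneg_of_mem_Icc_swap (hl : 0 < l) (hx : x ∈ Icc v u) (h : l * (u - v) < π) :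
    0 ≤ trigRamp l u v x :=
  div_nonneg_of_nonpos
    (sin_nonpos_of_nonpos_of_neg_pi_le (by nlinarith [hx.2]) (by nlinarith [hx.1]))
    (sin_nonpos_of_nonpos_of_neg_pi_le (by nlinarith [hx.1, hx.2]) (by linarith))

noncomputable def trigHatFun (l u v w x : ℝ) : ℝ :=
  if x = v then 1
  else if u < x ∧ x < v then trigRamp l u v x
  else if v < x ∧ x < w then trigRamp l w v x
  else 0

lemma trigHatFun_self : trigHatFun l u v w v = 1 := if_pos rfl

lemma trigHatFun_of_le (hxu : x ≤ u) (hxv : x < v) : trigHatFun l u v w x = 0 := by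
  simp [trigHatFun, hxv.ne, hxu.not_gt, hxv.not_gt]

lemma trigHatFun_of_ge (hwx : w ≤ x) (hvx : v < x) : trigHatFun l u v w x = 0 := by
  simp [trigHatFun, hvx.ne', hvx.not_gt, hwx.not_gt]

lemma trigHatFun_eqOn_left (h : sin (l * (v - u)) ≠ 0) :
    EqOn (trigHatFun l u v w) (trigRamp l u v) (Icc u v) := by
  intro x ⟨hux, hxv⟩
  rcases hxv.eq_or_lt with rfl | hxv
  · rw [trigHatFun_self, trigRamp_right h]
  rcases hux.eq_or_lt with rfl | hux
  · rw [trigHatFun_of_le le_rfl hxv, trigRamp_left]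
  · rw [trigHatFun, if_neg hxv.ne, if_pos ⟨hux, hxv⟩]

lemma trigHatFun_eqOn_right (h : sin (l * (w - v)) ≠ 0) :
    EqOn (trigHatFun l u v w) (trigRamp l w v) (Icc v w) := by
  intro x ⟨hvx, hxw⟩
  rcases hvx.eq_or_lt with rfl | hvx
  · rw [trigHatFun_self, trigRamp_right]
    rwa [← neg_sub w, mul_neg, sin_neg, neg_ne_zero]
  rcases hxw.eq_or_lt with rfl | hxw
  · rw [trigHatFun_of_ge le_rfl hvx, trigRamp_left]
  · rw [trigHatFun, if_neg hvx.ne', if_neg (fun h => h.2.not_gt hvx), if_pos ⟨hvx, hxw⟩]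

lemma trigHatFun_nonneg (hl : 0 < l) (huv : l * (v - u) < π) (hvw : l * (w - v) < π) :
    0 ≤ trigHatFun l u v w x := by
  unfold trigHatFun
  split_ifs with _ hu hw
  · exact zero_le_one
  · exact trigRamp_nonneg hl ⟨hu.1.le, hu.2.le⟩ huv
  · exact trigRamp_nonneg_of_mem_Icc_swap hl ⟨hw.1.le, hw.2.le⟩ hvw
  · exact le_rfl

end Ramp

section Spline

variable {l : ℝ} {n : ℕ} {t : ℕ → ℝ}

lemma eq_or_exists_mem_Icc_succ_of_mem_Icc {x : ℝ} (hx : x ∈ Icc (t 0) (t n)) :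
    x = t 0 ∨ ∃ j < n, x ∈ Icc (t j) (t (j + 1)) := by
  induction n with
  | zero => exact Or.inl (le_antisymm hx.2 hx.1)
  | succ m ih =>
    by_cases hxm : x ≤ t m
    · rcases ih ⟨hx.1, hxm⟩ with h | ⟨j, hj, hxj⟩
      · exact Or.inl h
      · exact Or.inr ⟨j, by omega, hxj⟩
    · exact Or.inr ⟨m, m.lt_succ_self, (not_le.1 hxm).le, hx.2⟩

lemma continuousOn_Icc_of_forall_Icc_succ {f : ℝ → ℝ}
    (h : ∀ j < n, ContinuousOn f (Icc (t j) (t (j + 1)))) : ContinuousOn f (Icc (t 0) (t n)) := by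
  induction n with
  | zero => rw [Icc_self]; exact continuousOn_singleton f _
  | succ m ih =>
    refine ((ih fun j hj => h j (by omega)).union_of_isClosed (h m m.lt_succ_self)
      isClosed_Icc isClosed_Icc).mono fun x hx => ?_
    by_cases hxm : x ≤ t m
    · exact Or.inl ⟨hx.1, hxm⟩
    · exact Or.inr ⟨(not_le.1 hxm).le, hx.2⟩

lemma isTrigSpline_of_forall_exists {s : ℝ → ℝ}
    (h : ∀ j < n, ∃ A B : ℝ, ∀ x ∈ Icc (t j) (t (j + 1)), s x = A * sin (l * x) + B * cos (l * x)) :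
    IsTrigSpline l n t s := by
  refine ⟨continuousOn_Icc_of_forall_Icc_succ fun j hj => ?_, h⟩
  obtain ⟨A, B, hAB⟩ := h j hj
  exact ContinuousOn.congr (by fun_prop) hAB

theorem IsTrigSpline.eqOn_of_eq_nodes {s s' : ℝ → ℝ} (hs : IsTrigSpline l n t s)
    (hs' : IsTrigSpline l n t s') (hsin : ∀ j < n, sin (l * (t (j + 1) - t j)) ≠ 0)
    (h : ∀ j ≤ n, s (t j) = s' (t j)) : EqOn s s' (Icc (t 0) (t n)) := by
  intro x hx
  rcases eq_or_exists_mem_Icc_succ_of_mem_Icc hx with rfl | ⟨j, hj, hxj⟩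
  · exact h 0 n.zero_le
  obtain ⟨A, B, hAB⟩ := hs.2 j hj
  obtain ⟨A', B', hAB'⟩ := hs'.2 j hj
  have hleft : t j ∈ Icc (t j) (t (j + 1)) := left_mem_Icc.2 (hxj.1.trans hxj.2)
  have hright : t (j + 1) ∈ Icc (t j) (t (j + 1)) := right_mem_Icc.2 (hxj.1.trans hxj.2)
  have hu := h j hj.le
  have hv := h (j + 1) hj
  rw [hAB _ hleft, hAB' _ hleft] at hu
  rw [hAB _ hright, hAB' _ hright] at hv
  obtain ⟨hA, hB⟩ := sin_cos_coeff_eq_zero_of_two_zeros (A := A - A') (B := B - B') (hsin j hj)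
    (by linear_combination hu) (by linear_combination hv)
  rw [hAB x hxj, hAB' x hxj, sub_eq_zero.1 hA, sub_eq_zero.1 hB]

/-- For `i = 0` the truncated `i - 1` makes the rising ramp degenerate (`u = v`), and for `i = n`
the `min` makes the falling one degenerate (`v = w`); neither is then ever evaluated. -/
noncomputable def trigHat (l : ℝ) (n : ℕ) (t : ℕ → ℝ) (i : ℕ) : ℝ → ℝ :=
  trigHatFun l (t (i - 1)) (t i) (t (min (i + 1) n))

lemma trigHat_apply_node (ht : StrictMonoOn t (Iic n)) {i j : ℕ} (hi : i ≤ n) (hj : j ≤ n) :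
    trigHat l n t i (t j) = if i = j then 1 else 0 := by
  split_ifs with hij
  · subst hij; exact trigHatFun_self
  rcases Nat.lt_or_gt_of_ne hij with hij | hij
  · refine trigHatFun_of_ge ?_ (ht hi hj hij)
    rw [show min (i + 1) n = i + 1 by omega]
    exact ht.monotoneOn (mem_Iic.2 (by omega)) hj hij
  · exact trigHatFun_of_le (ht.monotoneOn hj (mem_Iic.2 (by omega)) (by omega)) (ht hj hi hij)

lemma trigHat_eq_zero_of_notMem (ht : StrictMonoOn t (Iic n)) {i : ℕ} (hi : i ≤ n) {x : ℝ}
    (hx : x ∉ Icc (t (i - 1)) (t (min (i + 1) n))) : trigHat l n t i x = 0 := by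
  rw [mem_Icc, not_and_or, not_le, not_le] at hx
  rcases hx with hx | hx
  · exact trigHatFun_of_le hx.le (hx.trans_le (ht.monotoneOn (mem_Iic.2 (by omega)) hi (by omega)))
  · exact trigHatFun_of_ge hx.le ((ht.monotoneOn hi (mem_Iic.2 (by omega)) (by omega)).trans_lt hx)

lemma exists_trigHat_eq (ht : StrictMonoOn t (Iic n))
    (hsin : ∀ j < n, sin (l * (t (j + 1) - t j)) ≠ 0) {i : ℕ} (hi : i ≤ n) :
    ∀ j < n, ∃ A B : ℝ, ∀ x ∈ Icc (t j) (t (j + 1)),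
      trigHat l n t i x = A * sin (l * x) + B * cos (l * x) := by
  intro j hj
  have hmon : ∀ {p q}, p ≤ q → q ≤ n → t p ≤ t q := fun hpq hq =>
    ht.monotoneOn (mem_Iic.2 (hpq.trans hq)) hq hpq
  rcases lt_trichotomy (j + 1) i with hji | rfl | hji
  · refine ⟨0, 0, fun x hx => ?_⟩
    rw [trigHat, trigHatFun_of_le (hx.2.trans (hmon (by omega) (by omega)))
      (hx.2.trans_lt (ht (mem_Iic.2 (by omega)) hi (by omega)))]
    ring
  · obtain ⟨A, B, hAB⟩ := exists_trigRamp_eq l (t j) (t (j + 1))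
    exact ⟨A, B, fun x hx => (trigHatFun_eqOn_left (hsin j hj) hx).trans (hAB x)⟩
  rcases (Nat.lt_succ_iff.1 hji).eq_or_lt with rfl | hij
  · obtain ⟨A, B, hAB⟩ := exists_trigRamp_eq l (t (i + 1)) (t i)
    refine ⟨A, B, fun x hx => ?_⟩
    rw [trigHat, show min (i + 1) n = i + 1 by omega]
    exact (trigHatFun_eqOn_right (hsin i hj) hx).trans (hAB x)
  · refine ⟨0, 0, fun x hx => ?_⟩
    rw [trigHat, trigHatFun_of_ge ((hmon (by omega) hj.le).trans hx.1)
      ((ht hi (mem_Iic.2 (by omega)) hij).trans_le hx.1)]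
    ring

lemma isTrigHat_trigHat (ht : StrictMonoOn t (Iic n))
    (hsin : ∀ j < n, sin (l * (t (j + 1) - t j)) ≠ 0) {i : ℕ} (hi : i ≤ n) :
    IsTrigHat l n t i (trigHat l n t i) :=
  ⟨isTrigSpline_of_forall_exists (exists_trigHat_eq ht hsin hi),
    fun _ hj => trigHat_apply_node ht hi hj,
    fun _ _ hx => trigHat_eq_zero_of_notMem ht hi hx⟩

lemma trigHat_nonneg (hl : 0 < l) (hd : ∀ j < n, l * (t (j + 1) - t j) < π) {i : ℕ} (hi : i ≤ n)
    (x : ℝ) : 0 ≤ trigHat l n t i x := by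
  refine trigHatFun_nonneg hl ?_ ?_
  · rcases i with _ | i
    · simpa using pi_pos
    · simpa using hd i hi
  · rcases hi.eq_or_lt with rfl | hi
    · simpa using pi_pos
    · simpa [show min (i + 1) n = i + 1 by omega] using hd i hi

end Spline

theorem trigHat_exists_unique_nonneg_general (a b l : ℝ) (hl : 0 < l)
    (n : ℕ) (t : ℕ → ℝ) (hmono : ∀ i < n, t i < t (i + 1))
    (h0 : t 0 = a) (hb : t n = b)
    (hd : ∀ i < n, l * (t (i + 1) - t i) < Real.pi) :
    ∀ i ≤ n, ∃ N : ℝ → ℝ, IsTrigHat l n t i N ∧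
      (∀ x ∈ Set.Icc a b, 0 ≤ N x) ∧
      (∀ N' : ℝ → ℝ, IsTrigHat l n t i N' → ∀ x ∈ Set.Icc a b, N' x = N x) := by
  intro i hi
  have ht : StrictMonoOn t (Iic n) := strictMonoOn_Iic_of_lt_succ hmono
  have hsin : ∀ j < n, sin (l * (t (j + 1) - t j)) ≠ 0 := fun j hj =>
    (sin_pos_of_pos_of_lt_pi (mul_pos hl (sub_pos.2 (hmono j hj))) (hd j hj)).ne'
  have hN := isTrigHat_trigHat ht hsin hi
  refine ⟨trigHat l n t i, hN, fun x _ => trigHat_nonneg hl hd hi x, fun N' hN' x hx => ?_⟩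
  rw [← h0, ← hb] at hx
  exact hN'.1.eqOn_of_eq_nodes hN.1 hsin
    (fun j hj => by rw [hN'.2.1 j hj, hN.2.1 j hj]) hx

/-- If `λ · d(Δ) < π`, the hat trigonometric B-splines exist, are unique (as functions
on `[a, b]`), and are nonnegative on `[a, b]`. -/
theorem trigHat_exists_unique_nonneg (a b l : ℝ) (hab : a < b) (hl : 0 < l)
    (n : ℕ) (hn : 1 ≤ n) (t : ℕ → ℝ) (hmono : ∀ i < n, t i < t (i + 1))
    (h0 : t 0 = a) (hb : t n = b)
    (hd : ∀ i < n, l * (t (i + 1) - t i) < Real.pi) :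
    ∀ i ≤ n, ∃ N : ℝ → ℝ, IsTrigHat l n t i N ∧
      (∀ x ∈ Set.Icc a b, 0 ≤ N x) ∧
      (∀ N' : ℝ → ℝ, IsTrigHat l n t i N' → ∀ x ∈ Set.Icc a b, N' x = N x) :=
  trigHat_exists_unique_nonneg_general a b l hl n t hmono h0 hb hd
end

section
/- For λ > 0 and the operator L = D² − λ², the sup-norm of the L²-orthogonal projector P_{𝕊(L,Δ)} : C[a,b] → 𝕊(L,Δ) satisfies ‖P_{𝕊(L,Δ)}‖_∞ ≤ 3 for every partition Δ of [a,b]. -/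
open Real Set intervalIntegral

/-- The `L²[a,b]` inner product `∫_a^b f g`. -/
noncomputable def ip (a b : ℝ) (f g : ℝ → ℝ) : ℝ := ∫ x in a..b, f x * g x

lemma log_le_aux (E : ℝ) (hE : 1 ≤ E) :
    Real.log E ≤ (E^3 + 9*E^2 - 9*E - 1)/(6*E^2 + 6*E) := by
  set G : ℝ → ℝ := fun x => (x^3 + 9*x^2 - 9*x - 1)/(6*x^2 + 6*x) - Real.log x with hG
  have key : ∀ x : ℝ, 0 < x → HasDerivAt G ((x-1)^4/(6*x^2*(x+1)^2)) x := by
    intro x hx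
    have hden : (6*x^2 + 6*x) ≠ 0 := by positivity
    have h1 : HasDerivAt (fun y : ℝ => y^3 + 9*y^2 - 9*y - 1) (3*x^2 + 18*x - 9) x := by
      have := ((hasDerivAt_pow 3 x).add (((hasDerivAt_pow 2 x).const_mul 9))).sub
        ((hasDerivAt_id x).const_mul 9)
      simpa using (this.sub_const 1).congr_deriv (by ring)
    have h2 : HasDerivAt (fun y : ℝ => 6*y^2 + 6*y) (12*x + 6) x := by
      have := ((hasDerivAt_pow 2 x).const_mul 6).add ((hasDerivAt_id x).const_mul 6)
      exact this.congr_deriv (by ring)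
    have h3 := (h1.div h2 hden).sub (Real.hasDerivAt_log (ne_of_gt hx))
    refine h3.congr_deriv ?_
    field_simp
    ring
  have hmono : MonotoneOn G (Set.Ici (1:ℝ)) := by
    apply monotoneOn_of_deriv_nonneg (convex_Ici 1)
    · intro x hx
      exact ((key x (lt_of_lt_of_le one_pos hx)).continuousAt).continuousWithinAt
    · intro x hx
      simp only [interior_Ici] at hx
      exact ((key x (lt_trans one_pos hx)).differentiableAt).differentiableWithinAt
    · intro x hx
      simp only [interior_Ici] at hx
      rw [(key x (lt_trans one_pos hx)).deriv]
      positivity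
  have h1 : G 1 ≤ G E := hmono (by simp) hE hE
  have : G 1 = 0 := by norm_num [hG]
  rw [this] at h1
  simpa [hG, sub_nonneg] using h1


noncomputable def hatR (l c d x : ℝ) : ℝ := Real.sinh (l*(x - c)) / Real.sinh (l*(d - c))
noncomputable def hatL (l c d x : ℝ) : ℝ := Real.sinh (l*(d - x)) / Real.sinh (l*(d - c))
noncomputable def B1 (l c d : ℝ) : ℝ := (Real.cosh (l*(d-c)) - 1)/(l * Real.sinh (l*(d-c)))
noncomputable def A2 (l c d : ℝ) : ℝ :=
  (Real.sinh (l*(d-c)) * Real.cosh (l*(d-c)) - l*(d-c))/(2*l*(Real.sinh (l*(d-c)))^2)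
noncomputable def A3 (l c d : ℝ) : ℝ :=
  (l*(d-c) * Real.cosh (l*(d-c)) - Real.sinh (l*(d-c)))/(2*l*(Real.sinh (l*(d-c)))^2)

lemma sinh_nonneg' {x : ℝ} (h : 0 ≤ x) : 0 ≤ Real.sinh x := by
  rw [← Real.sinh_zero]; exact Real.sinh_le_sinh.mpr h

lemma contHatR (l c d : ℝ) : Continuous (hatR l c d) := by
  unfold hatR; fun_prop

lemma contHatL (l c d : ℝ) : Continuous (hatL l c d) := by
  unfold hatL; fun_prop

lemma hAff (m q x : ℝ) : HasDerivAt (fun y : ℝ => m*(y - q)) m x := by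
  simpa using ((hasDerivAt_id x).sub_const q).const_mul m

lemma hAff' (m q x : ℝ) : HasDerivAt (fun y : ℝ => m*(q - y)) (-m) x := by
  simpa using ((hasDerivAt_id x).const_sub q).const_mul m

section
variable {l c d : ℝ} (hl : 0 < l) (hcd : c < d)
include hl hcd

lemma S_pos : 0 < Real.sinh (l*(d-c)) := Real.sinh_pos_iff.mpr (by nlinarith)

lemma hatR_mem {x : ℝ} (hx : x ∈ Icc c d) : hatR l c d x ∈ Icc (0:ℝ) 1 := by
  obtain ⟨h1, h2⟩ := hx
  have hS := S_pos hl hcd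
  unfold hatR
  constructor
  · exact div_nonneg (sinh_nonneg' (by nlinarith)) hS.le
  · rw [div_le_one hS]
    exact Real.sinh_le_sinh.mpr (by nlinarith)

lemma hatL_mem {x : ℝ} (hx : x ∈ Icc c d) : hatL l c d x ∈ Icc (0:ℝ) 1 := by
  obtain ⟨h1, h2⟩ := hx
  have hS := S_pos hl hcd
  unfold hatL
  constructor
  · exact div_nonneg (sinh_nonneg' (by nlinarith)) hS.le
  · rw [div_le_one hS]
    exact Real.sinh_le_sinh.mpr (by nlinarith)

lemma hatR_nonpos {x : ℝ} (hx : x ≤ c) : hatR l c d x ≤ 0 := by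
  have hS := S_pos hl hcd
  apply div_nonpos_of_nonpos_of_nonneg _ hS.le
  rw [← Real.sinh_zero]; exact Real.sinh_le_sinh.mpr (by nlinarith)

lemma hatL_nonpos {x : ℝ} (hx : d ≤ x) : hatL l c d x ≤ 0 := by
  have hS := S_pos hl hcd
  apply div_nonpos_of_nonpos_of_nonneg _ hS.le
  rw [← Real.sinh_zero]; exact Real.sinh_le_sinh.mpr (by nlinarith)

lemma hatR_ge_one {x : ℝ} (hx : d ≤ x) : 1 ≤ hatR l c d x := by
  have hS := S_pos hl hcd
  unfold hatR
  rw [le_div_iff₀ hS, one_mul]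
  exact Real.sinh_le_sinh.mpr (by nlinarith)

lemma hatL_ge_one {x : ℝ} (hx : x ≤ c) : 1 ≤ hatL l c d x := by
  have hS := S_pos hl hcd
  unfold hatL
  rw [le_div_iff₀ hS, one_mul]
  exact Real.sinh_le_sinh.mpr (by nlinarith)

lemma J1 : ∫ x in c..d, Real.sinh (l*(x - c)) = (Real.cosh (l*(d-c)) - 1)/l := by
  rw [intervalIntegral.integral_eq_sub_of_hasDerivAt
    (f := fun x => Real.cosh (l*(x - c)) / l)
    (f' := fun x => Real.sinh (l*(x - c)))
    (fun x _ => by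
      have := ((hAff l c x).cosh).div_const l
      apply this.congr_deriv
      field_simp [mul_comm])
    ((by fun_prop : Continuous _).intervalIntegrable _ _)]
  simp
  ring

lemma J1' : ∫ x in c..d, Real.sinh (l*(d - x)) = (Real.cosh (l*(d-c)) - 1)/l := by
  rw [intervalIntegral.integral_eq_sub_of_hasDerivAt
    (f := fun x => -(Real.cosh (l*(d - x)) / l))
    (f' := fun x => Real.sinh (l*(d - x)))
    (fun x _ => by
      have := (((hAff' l d x).cosh).div_const l).neg
      apply this.congr_deriv
      field_simp [mul_comm])
    ((by fun_prop : Continuous _).intervalIntegrable _ _)]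
  simp
  field_simp
  ring

lemma J2 : ∫ x in c..d, (Real.sinh (l*(x - c)))^2
    = (Real.sinh (l*(d-c)) * Real.cosh (l*(d-c)) - l*(d-c))/(2*l) := by
  rw [intervalIntegral.integral_eq_sub_of_hasDerivAt
    (f := fun x => Real.sinh (l*(x - c)) * Real.cosh (l*(x - c)) / (2*l) - (x - c)/2)
    (f' := fun x => (Real.sinh (l*(x - c)))^2)
    (fun x _ => by
      have h1 := hAff l c x
      have := (((h1.sinh).mul (h1.cosh)).div_const (2*l)).sub
        (((hasDerivAt_id x).sub_const c).div_const 2)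
      apply this.congr_deriv
      have hc := Real.cosh_sq (l*(x-c))
      field_simp
      nlinarith [hc])
    ((by fun_prop : Continuous _).intervalIntegrable _ _)]
  simp
  field_simp

lemma J2' : ∫ x in c..d, (Real.sinh (l*(d - x)))^2
    = (Real.sinh (l*(d-c)) * Real.cosh (l*(d-c)) - l*(d-c))/(2*l) := by
  rw [intervalIntegral.integral_eq_sub_of_hasDerivAt
    (f := fun x => -(Real.sinh (l*(d - x)) * Real.cosh (l*(d - x)) / (2*l)) + (d - x)/2 )
    (f' := fun x => (Real.sinh (l*(d - x)))^2)
    (fun x _ => by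
      have h1 := hAff' l d x
      have := ((((h1.sinh).mul (h1.cosh)).div_const (2*l)).neg).add
        (((hasDerivAt_id x).const_sub d).div_const 2)
      apply this.congr_deriv
      have hc := Real.cosh_sq (l*(d-x))
      field_simp
      nlinarith [hc])
    ((by fun_prop : Continuous _).intervalIntegrable _ _)]
  simp
  field_simp
  ring

lemma J3 : ∫ x in c..d, Real.sinh (l*(x - c)) * Real.sinh (l*(d - x))
    = (l*(d-c) * Real.cosh (l*(d-c)) - Real.sinh (l*(d-c)))/(2*l) := by
  rw [intervalIntegral.integral_eq_sub_of_hasDerivAt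
    (f := fun x => x * Real.cosh (l*(d-c)) / 2 - Real.sinh (l*(2*x - c - d)) / (4*l))
    (f' := fun x => Real.sinh (l*(x - c)) * Real.sinh (l*(d - x)))
    (fun x _ => by
      have h2 : HasDerivAt (fun y : ℝ => l*(2*y - c - d)) (2*l) x := by
        have : (fun y : ℝ => l*(2*y - c - d)) = fun y : ℝ => (2*l)*(y - (c+d)/2) := by
          funext y; ring
        rw [this]; exact hAff (2*l) ((c+d)/2) x
      have := (((hasDerivAt_id x).mul_const (Real.cosh (l*(d-c)))).div_const 2).sub
        ((h2.sinh).div_const (4*l))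
      apply this.congr_deriv
      have e1 := Real.cosh_add (l*(x-c)) (l*(d-x))
      have e2 := Real.cosh_sub (l*(x-c)) (l*(d-x))
      have r1 : l*(x-c) + l*(d-x) = l*(d-c) := by ring
      have r2 : l*(x-c) - l*(d-x) = l*(2*x - c - d) := by ring
      rw [r1] at e1; rw [r2] at e2
      field_simp
      nlinarith [e1, e2])
    ((by fun_prop : Continuous _).intervalIntegrable _ _)]
  have e : l*(2*c - c - d) = -(l*(d-c)) := by ring
  have e2 : l*(2*d - c - d) = l*(d-c) := by ring
  rw [e, e2, Real.sinh_neg]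
  field_simp
  ring

end


section
variable {l c d : ℝ} (hl : 0 < l) (hcd : c < d)
include hl hcd

lemma B1_pos : 0 < B1 l c d := by
  have hS := S_pos hl hcd
  have hC : 1 < Real.cosh (l*(d-c)) := by
    rw [← Real.cosh_zero]
    exact Real.cosh_lt_cosh.mpr (by rw [abs_zero, abs_of_pos (by nlinarith)]; nlinarith)
  exact div_pos (by linarith) (by positivity)

lemma sc_le : Real.sinh (l*(d-c)) ≤ l*(d-c) * Real.cosh (l*(d-c)) := by
  set s := l*(d-c) with hs
  have hspos : 0 < s := by rw [hs]; nlinarith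
  set g : ℝ → ℝ := fun x => x * Real.cosh x - Real.sinh x with hg
  have key : ∀ x : ℝ, HasDerivAt g (x * Real.sinh x) x := by
    intro x
    have h1 := ((hasDerivAt_id x).mul (Real.hasDerivAt_cosh x)).sub (Real.hasDerivAt_sinh x)
    apply h1.congr_deriv
    simp only [id]
    ring
  have hmono : MonotoneOn g (Set.Ici (0:ℝ)) := by
    apply monotoneOn_of_deriv_nonneg (convex_Ici 0)
    · exact fun x _ => (key x).continuousAt.continuousWithinAt
    · exact fun x _ => (key x).differentiableAt.differentiableWithinAt
    · intro x hx
      simp only [interior_Ici, Set.mem_Ioi] at hx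
      rw [(key x).deriv]
      exact mul_nonneg hx.le (sinh_nonneg' hx.le)
  have := hmono (Set.self_mem_Ici) (Set.mem_Ici.mpr hspos.le) hspos.le
  simp [hg] at this
  linarith

lemma A3_nonneg : 0 ≤ A3 l c d := by
  have hS := S_pos hl hcd
  have h := sc_le hl hcd
  exact div_nonneg (by linarith) (by positivity)

lemma key_ineq : B1 l c d / 3 ≤ A2 l c d - A3 l c d := by
  have hS := S_pos hl hcd
  set s := l*(d-c) with hs
  have hspos : 0 < s := by rw [hs]; nlinarith
  set E := Real.exp s with hE
  have hE1 : 1 ≤ E := by rw [hE]; exact Real.one_le_exp hspos.le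
  have hEpos : (0:ℝ) < E := lt_of_lt_of_le one_pos hE1
  have hEne : E ≠ 0 := ne_of_gt hEpos
  have hden : (0:ℝ) < 6*E^2 + 6*E := by positivity
  have hlog2 : s * (6*E^2 + 6*E) ≤ E^3 + 9*E^2 - 9*E - 1 := by
    have h := log_le_aux E hE1
    rw [hE, Real.log_exp] at h
    calc s * (6*E^2 + 6*E) ≤ ((E^3 + 9*E^2 - 9*E - 1)/(6*E^2 + 6*E)) * (6*E^2 + 6*E) :=
          mul_le_mul_of_nonneg_right h hden.le
      _ = E^3 + 9*E^2 - 9*E - 1 := by field_simp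
  have hSE : Real.sinh s = (E - E⁻¹)/2 := by rw [Real.sinh_eq, hE, Real.exp_neg]
  have hCE : Real.cosh s = (E + E⁻¹)/2 := by rw [Real.cosh_eq, hE, Real.exp_neg]
  have goal' : 2*Real.sinh s*(Real.cosh s - 1) ≤ 3*(Real.cosh s+1)*(Real.sinh s - s) := by
    rw [← sub_nonneg, hSE, hCE]
    have expand : 3*((E+E⁻¹)/2+1)*((E-E⁻¹)/2 - s) - 2*((E-E⁻¹)/2)*((E+E⁻¹)/2 - 1)
        = (E+1)*((E^3+9*E^2-9*E-1) - s*(6*E^2+6*E))/(4*E^2) := by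
      field_simp
      ring
    rw [expand]
    apply div_nonneg _ (by positivity)
    exact mul_nonneg (by linarith) (by linarith)
  unfold A2 A3 B1
  rw [← hs]
  rw [div_sub_div_same, div_div]
  rw [div_le_div_iff₀ (by positivity) (by positivity)]
  have hfac : 0 ≤ l * Real.sinh s := by positivity
  nlinarith [mul_le_mul_of_nonneg_left goal' hfac, hS, hl]

end


section
variable {l c d : ℝ} (hl : 0 < l) (hcd : c < d)
include hl hcd

/-- Representation of an exponential combination in the hat basis (identity on all of ℝ). -/
lemma exp_rep (A B x : ℝ) :
    A * Real.exp (l*x) + B * Real.exp (-l*x)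
      = (A * Real.exp (l*c) + B * Real.exp (-l*c)) * hatL l c d x
        + (A * Real.exp (l*d) + B * Real.exp (-l*d)) * hatR l c d x := by
  have hS := (S_pos hl hcd).ne'
  have key : (A * Real.exp (l*x) + B * Real.exp (-l*x)) * Real.sinh (l*(d-c))
      = (A * Real.exp (l*c) + B * Real.exp (-l*c)) * Real.sinh (l*(d-x))
        + (A * Real.exp (l*d) + B * Real.exp (-l*d)) * Real.sinh (l*(x-c)) := by
    simp only [Real.sinh_eq]
    rw [show l*(d-x) = l*d - l*x by ring, show l*(x-c) = l*x - l*c by ring,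
        show l*(d-c) = l*d - l*c by ring]
    simp only [Real.exp_sub, neg_sub, neg_mul, Real.exp_neg]
    field_simp [Real.exp_ne_zero]
    ring
  unfold hatL hatR
  rw [← mul_div_assoc, ← mul_div_assoc, ← add_div, ← key, mul_div_assoc,
      div_self hS, mul_one]

/-- Sup bound on an interval: an exponential combination is bounded by endpoint values. -/
lemma exp_sup_bound (A B x : ℝ) (hx : x ∈ Icc c d) :
    |A * Real.exp (l*x) + B * Real.exp (-l*x)|
      ≤ max (|A * Real.exp (l*c) + B * Real.exp (-l*c)|)
            (|A * Real.exp (l*d) + B * Real.exp (-l*d)|) := by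
  have hS := S_pos hl hcd
  have hrep := exp_rep hl hcd A B x
  set P := A * Real.exp (l*c) + B * Real.exp (-l*c)
  set Q := A * Real.exp (l*d) + B * Real.exp (-l*d)
  rw [hrep]
  have hL : hatL l c d x ∈ Icc (0:ℝ) 1 := by
    unfold hatL
    obtain ⟨h1, h2⟩ := hx
    constructor
    · exact div_nonneg (sinh_nonneg' (by nlinarith)) hS.le
    · rw [div_le_one hS]; exact Real.sinh_le_sinh.mpr (by nlinarith)
  have hR : hatR l c d x ∈ Icc (0:ℝ) 1 := by
    unfold hatR
    obtain ⟨h1, h2⟩ := hx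
    constructor
    · exact div_nonneg (sinh_nonneg' (by nlinarith)) hS.le
    · rw [div_le_one hS]; exact Real.sinh_le_sinh.mpr (by nlinarith)
  have hsum : hatL l c d x + hatR l c d x ≤ 1 := by
    unfold hatL hatR
    rw [← add_div, div_le_one hS]
    obtain ⟨h1, h2⟩ := hx
    have key : ∀ u v : ℝ, 0 ≤ u → 0 ≤ v → Real.sinh u + Real.sinh v ≤ Real.sinh (u+v) := by
      intro u v hu hv
      rw [Real.sinh_add]
      nlinarith [Real.one_le_cosh u, Real.one_le_cosh v, sinh_nonneg' hu, sinh_nonneg' hv]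
    have := key (l*(d-x)) (l*(x-c)) (by nlinarith) (by nlinarith)
    calc Real.sinh (l*(d-x)) + Real.sinh (l*(x-c)) ≤ Real.sinh (l*(d-x) + l*(x-c)) := this
      _ = Real.sinh (l*(d-c)) := by ring_nf
  calc |P * hatL l c d x + Q * hatR l c d x|
      ≤ |P| * hatL l c d x + |Q| * hatR l c d x := by
        calc _ ≤ |P * hatL l c d x| + |Q * hatR l c d x| := abs_add_le _ _
        _ = |P| * hatL l c d x + |Q| * hatR l c d x := by
            rw [abs_mul, abs_mul, abs_of_nonneg hL.1, abs_of_nonneg hR.1]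
    _ ≤ max |P| |Q| * hatL l c d x + max |P| |Q| * hatR l c d x :=
        add_le_add (mul_le_mul_of_nonneg_right (le_max_left _ _) hL.1)
          (mul_le_mul_of_nonneg_right (le_max_right _ _) hR.1)
    _ = max |P| |Q| * (hatL l c d x + hatR l c d x) := by ring
    _ ≤ max |P| |Q| * 1 :=
        mul_le_mul_of_nonneg_left hsum (le_trans (abs_nonneg P) (le_max_left _ _))
    _ = max |P| |Q| := mul_one _

end


section
variable {l c d : ℝ} (hl : 0 < l) (hcd : c < d)
include hl hcd

lemma intR : ∫ x in c..d, hatR l c d x = B1 l c d := by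
  have hS := (S_pos hl hcd).ne'
  unfold hatR B1
  rw [intervalIntegral.integral_div, J1 hl hcd, div_div]

lemma intL : ∫ x in c..d, hatL l c d x = B1 l c d := by
  have hS := (S_pos hl hcd).ne'
  unfold hatL B1
  rw [intervalIntegral.integral_div, J1' hl hcd, div_div]

lemma intRR : ∫ x in c..d, hatR l c d x * hatR l c d x = A2 l c d := by
  have hS := (S_pos hl hcd).ne'
  unfold hatR A2
  rw [intervalIntegral.integral_congr
    (g := fun x => (Real.sinh (l*(x-c)))^2 / (Real.sinh (l*(d-c)))^2)
    (fun x _ => by rw [div_mul_div_comm, ← sq, ← sq]),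
    intervalIntegral.integral_div, J2 hl hcd, div_div]

lemma intLL : ∫ x in c..d, hatL l c d x * hatL l c d x = A2 l c d := by
  have hS := (S_pos hl hcd).ne'
  unfold hatL A2
  rw [intervalIntegral.integral_congr
    (g := fun x => (Real.sinh (l*(d-x)))^2 / (Real.sinh (l*(d-c)))^2)
    (fun x _ => by rw [div_mul_div_comm, ← sq, ← sq]),
    intervalIntegral.integral_div, J2' hl hcd, div_div]

lemma intLR : ∫ x in c..d, hatL l c d x * hatR l c d x = A3 l c d := by
  have hS := (S_pos hl hcd).ne'
  unfold hatL hatR A3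
  rw [intervalIntegral.integral_congr
    (g := fun x => (Real.sinh (l*(x-c)) * Real.sinh (l*(d-x))) / (Real.sinh (l*(d-c)))^2)
    (fun x _ => by rw [div_mul_div_comm, ← sq]; ring_nf),
    intervalIntegral.integral_div, J3 hl hcd, div_div]

lemma int_p_hatR (p : ℝ → ℝ) (A B : ℝ)
    (hp_on : ∀ x ∈ Icc c d, p x = A * Real.exp (l*x) + B * Real.exp (-l*x)) :
    ∫ x in c..d, p x * hatR l c d x = p c * A3 l c d + p d * A2 l c d := by
  have hc : p c = A * Real.exp (l*c) + B * Real.exp (-l*c) :=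
    hp_on c ⟨le_refl c, hcd.le⟩
  have hd : p d = A * Real.exp (l*d) + B * Real.exp (-l*d) :=
    hp_on d ⟨hcd.le, le_refl d⟩
  rw [intervalIntegral.integral_congr
    (g := fun x => p c * (hatL l c d x * hatR l c d x) + p d * (hatR l c d x * hatR l c d x))
    (fun x hx => by
      rw [uIcc_of_le hcd.le] at hx
      rw [hp_on x hx, exp_rep hl hcd, hc, hd]; ring)]
  rw [intervalIntegral.integral_add
      (by exact ((contHatL l c d).mul (contHatR l c d)) |> (continuous_const.mul ·) |>.intervalIntegrable _ _)
      (by exact ((contHatR l c d).mul (contHatR l c d)) |> (continuous_const.mul ·) |>.intervalIntegrable _ _),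
    intervalIntegral.integral_const_mul, intervalIntegral.integral_const_mul,
    intLR hl hcd, intRR hl hcd]

lemma int_p_hatL (p : ℝ → ℝ) (A B : ℝ)
    (hp_on : ∀ x ∈ Icc c d, p x = A * Real.exp (l*x) + B * Real.exp (-l*x)) :
    ∫ x in c..d, p x * hatL l c d x = p c * A2 l c d + p d * A3 l c d := by
  have hc : p c = A * Real.exp (l*c) + B * Real.exp (-l*c) :=
    hp_on c ⟨le_refl c, hcd.le⟩
  have hd : p d = A * Real.exp (l*d) + B * Real.exp (-l*d) :=
    hp_on d ⟨hcd.le, le_refl d⟩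
  rw [intervalIntegral.integral_congr
    (g := fun x => p c * (hatL l c d x * hatL l c d x) + p d * (hatL l c d x * hatR l c d x))
    (fun x hx => by
      rw [uIcc_of_le hcd.le] at hx
      rw [hp_on x hx, exp_rep hl hcd, hc, hd]; ring)]
  rw [intervalIntegral.integral_add
      (by exact ((contHatL l c d).mul (contHatL l c d)) |> (continuous_const.mul ·) |>.intervalIntegrable _ _)
      (by exact ((contHatL l c d).mul (contHatR l c d)) |> (continuous_const.mul ·) |>.intervalIntegrable _ _),
    intervalIntegral.integral_const_mul, intervalIntegral.integral_const_mul,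
    intLL hl hcd, intLR hl hcd]

end


lemma knot_mono {n : ℕ} {t : ℕ → ℝ} (hmono : ∀ i < n, t i < t (i + 1)) :
    ∀ i j, i ≤ j → j ≤ n → t i ≤ t j := by
  intro i j hij hjn
  induction j with
  | zero => simp_all
  | succ m ih =>
    rcases Nat.lt_or_ge i (m+1) with h | h
    · have h1 : t i ≤ t m := ih (Nat.lt_succ_iff.mp h) (by omega)
      have h2 : t m < t (m+1) := hmono m (by omega)
      linarith
    · have : i = m + 1 := le_antisymm hij h
      rw [this]

lemma cover {n : ℕ} (hn : 1 ≤ n) {t : ℕ → ℝ} (hmono : ∀ i < n, t i < t (i + 1))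
    {x : ℝ} (hx : x ∈ Icc (t 0) (t n)) : ∃ i < n, x ∈ Icc (t i) (t (i+1)) := by
  induction n with
  | zero => omega
  | succ m ih =>
    rcases Nat.eq_zero_or_pos m with hm | hm
    · exact ⟨0, by omega, by simpa [hm] using hx⟩
    · rcases le_or_gt x (t m) with h | h
      · obtain ⟨i, hi, hxi⟩ := ih hm (fun i hi => hmono i (by omega)) ⟨hx.1, h⟩
        exact ⟨i, by omega, hxi⟩
      · exact ⟨m, by omega, ⟨h.le, hx.2⟩⟩

lemma integral_split {n : ℕ} {t : ℕ → ℝ} (F : ℝ → ℝ)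
    (hF : ∀ i < n, IntervalIntegrable F MeasureTheory.volume (t i) (t (i+1))) :
    ∫ x in (t 0)..(t n), F x = ∑ i ∈ Finset.range n, ∫ x in (t i)..(t (i+1)), F x := by
  induction n with
  | zero => simp
  | succ m ih =>
    have hint : ∀ m' ≤ m, IntervalIntegrable F MeasureTheory.volume (t 0) (t m') := by
      intro m' hm'
      induction m' with
      | zero => exact IntervalIntegrable.refl
      | succ k ihk =>
        exact (ihk (by omega)).trans (hF k (by omega))
    rw [Finset.sum_range_succ, ← ih (fun i hi => hF i (by omega)),
      intervalIntegral.integral_add_adjacent_intervals (hint m le_rfl) (hF m (by omega))]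


lemma arith_main (M T c0 cm cp B1l A2l A3l B1r A2r A3r : ℝ)
    (hM : |c0| = M) (hcm : |cm| ≤ M) (hcp : |cp| ≤ M)
    (hT : T = cm*A3l + c0*(A2l+A2r) + cp*A3r)
    (habs : |T| ≤ B1l + B1r)
    (hA3l : 0 ≤ A3l) (hA3r : 0 ≤ A3r)
    (hkl : B1l/3 ≤ A2l - A3l) (hkr : B1r/3 ≤ A2r - A3r)
    (hB1l : 0 ≤ B1l) (hB1r : 0 ≤ B1r) (hBpos : 0 < B1l + B1r) : M ≤ 3 := by
  have hM0 : 0 ≤ M := hM ▸ abs_nonneg c0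
  obtain ⟨hcm1, hcm2⟩ := abs_le.mp hcm
  obtain ⟨hcp1, hcp2⟩ := abs_le.mp hcp
  obtain ⟨hT1, hT2⟩ := abs_le.mp habs
  rcases abs_cases c0 with ⟨h1, _⟩ | ⟨h1, _⟩ <;> rw [h1] at hM <;> subst hM
  · nlinarith [mul_nonneg (by linarith : (0:ℝ) ≤ c0 + cm) hA3l,
      mul_nonneg (by linarith : (0:ℝ) ≤ c0 + cp) hA3r,
      mul_le_mul_of_nonneg_left hkl (by linarith : (0:ℝ) ≤ c0),
      mul_le_mul_of_nonneg_left hkr (by linarith : (0:ℝ) ≤ c0)]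
  · nlinarith [mul_nonneg (by linarith : (0:ℝ) ≤ -c0 - cm) hA3l,
      mul_nonneg (by linarith : (0:ℝ) ≤ -c0 - cp) hA3r,
      mul_le_mul_of_nonneg_left hkl (by linarith : (0:ℝ) ≤ -c0),
      mul_le_mul_of_nonneg_left hkr (by linarith : (0:ℝ) ≤ -c0)]


section
variable {l c d : ℝ} (hl : 0 < l) (hcd : c < d)
include hl hcd

lemma hatR_exp : ∃ A B : ℝ, ∀ x : ℝ, hatR l c d x = A * Real.exp (l*x) + B * Real.exp (-l*x) := by
  have hS := (S_pos hl hcd).ne'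
  refine ⟨Real.exp (-(l*c))/(2*Real.sinh (l*(d-c))), -(Real.exp (l*c))/(2*Real.sinh (l*(d-c))),
    fun x => ?_⟩
  unfold hatR
  rw [Real.sinh_eq (l*(x-c)), show l*(x-c) = l*x - l*c by ring]
  rw [Real.exp_sub, neg_sub, Real.exp_sub]
  rw [Real.exp_neg (l*c), show -l*x = -(l*x) by ring, Real.exp_neg (l*x)]
  field_simp [Real.exp_ne_zero]
  ring

lemma hatL_exp : ∃ A B : ℝ, ∀ x : ℝ, hatL l c d x = A * Real.exp (l*x) + B * Real.exp (-l*x) := by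
  have hS := (S_pos hl hcd).ne'
  refine ⟨-(Real.exp (-(l*d)))/(2*Real.sinh (l*(d-c))), Real.exp (l*d)/(2*Real.sinh (l*(d-c))),
    fun x => ?_⟩
  unfold hatL
  rw [Real.sinh_eq (l*(d-x)), show l*(d-x) = l*d - l*x by ring]
  rw [Real.exp_sub, neg_sub, Real.exp_sub]
  rw [Real.exp_neg (l*d), show -l*x = -(l*x) by ring, Real.exp_neg (l*x)]
  field_simp [Real.exp_ne_zero]
  ring
end

lemma core (l : ℝ) (hl : 0 < l) (n : ℕ) (hn : 1 ≤ n) (t : ℕ → ℝ)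
    (hmono : ∀ i < n, t i < t (i + 1))
    (f : ℝ → ℝ) (hf : ContinuousOn f (Set.Icc (t 0) (t n)))
    (hf1 : ∀ x ∈ Set.Icc (t 0) (t n), |f x| ≤ 1)
    (p : ℝ → ℝ) (hp : IsExpSpline l n t p)
    (horth : ∀ s : ℝ → ℝ, IsExpSpline l n t s →
      ip (t 0) (t n) (fun x => f x - p x) s = 0)
    (k : ℕ) (hk : k ≤ n) (hkmax : ∀ i, i ≤ n → |p (t i)| ≤ |p (t k)|) :
    |p (t k)| ≤ 3 := by
  have hknots : ∀ i j, i ≤ j → j ≤ n → t i ≤ t j := knot_mono hmono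
  have h0n : t 0 ≤ t n := hknots 0 n (by omega) le_rfl
  set u : ℝ → ℝ := if 0 < k then hatR l (t (k-1)) (t k) else fun _ => 1 with hu
  set v : ℝ → ℝ := if k < n then hatL l (t k) (t (k+1)) else fun _ => 1 with hv
  set sp : ℝ → ℝ := fun x => max 0 (min (u x) (v x)) with hsp
  have hcu : Continuous u := by
    rw [hu]; split_ifs; exacts [contHatR l _ _, continuous_const]
  have hcv : Continuous v := by
    rw [hv]; split_ifs; exacts [contHatL l _ _, continuous_const]
  have hcsp : Continuous sp := by
    rw [hsp]; exact continuous_const.max (hcu.min hcv)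
  have hcdl : 0 < k → t (k-1) < t k := by
    intro hk0
    have h := hmono (k-1) (by omega)
    rwa [Nat.sub_add_cancel hk0] at h
  -- sp agrees with hatR on the left interval
  have hsl : 0 < k → ∀ x ∈ Set.Icc (t (k-1)) (t k), sp x = hatR l (t (k-1)) (t k) x := by
    intro hk0 x hx
    have hcd := hcdl hk0
    have h1 := hatR_mem hl hcd hx
    have h2 : hatR l (t (k-1)) (t k) x ≤ v x := by
      rw [hv]; split_ifs with h
      · exact le_trans h1.2 (hatL_ge_one hl (hmono k h) hx.2)
      · exact h1.2
    simp only [hsp, hu, if_pos hk0]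
    rw [min_eq_left h2, max_eq_right h1.1]
  -- sp agrees with hatL on the right interval
  have hsr : k < n → ∀ x ∈ Set.Icc (t k) (t (k+1)), sp x = hatL l (t k) (t (k+1)) x := by
    intro hkn x hx
    have hcd := hmono k hkn
    have h1 := hatL_mem hl hcd hx
    have h2 : hatL l (t k) (t (k+1)) x ≤ u x := by
      rw [hu]; split_ifs with h
      · exact le_trans h1.2 (hatR_ge_one hl (hcdl h) hx.1)
      · exact h1.2
    simp only [hsp, hv, if_pos hkn]
    rw [min_eq_right h2, max_eq_right h1.1]
  -- sp vanishes away from the two central intervals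
  have hz : ∀ i, i < n → (i + 1 < k ∨ k < i) → ∀ x ∈ Set.Icc (t i) (t (i+1)), sp x = 0 := by
    intro i hi hcase x hx
    rcases hcase with h | h
    · have hk0 : 0 < k := by omega
      have hcd := hcdl hk0
      have hxle : x ≤ t (k-1) := le_trans hx.2 (hknots (i+1) (k-1) (by omega) (by omega))
      have hun : u x ≤ 0 := by
        rw [hu, if_pos hk0]; exact hatR_nonpos hl hcd hxle
      simp only [hsp]
      exact max_eq_left (le_trans (min_le_left _ _) hun)
    · have hkn : k < n := by omega
      have hcd := hmono k hkn
      have hxge : t (k+1) ≤ x := le_trans (hknots (k+1) i (by omega) (by omega)) hx.1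
      have hvn : v x ≤ 0 := by
        rw [hv, if_pos hkn]; exact hatL_nonpos hl hcd hxge
      simp only [hsp]
      exact max_eq_left (le_trans (min_le_right _ _) hvn)
  have hsp0 : ∀ x, 0 ≤ sp x := fun x => le_max_left _ _
  -- sp is a spline
  have hspline : IsExpSpline l n t sp := by
    constructor
    · exact hcsp.continuousOn
    · intro i hi
      rcases lt_trichotomy (i+1) k with h | h | h
      · exact ⟨0, 0, fun x hx => by rw [hz i hi (Or.inl h) x hx]; simp⟩
      · have hk0 : 0 < k := by omega
        obtain ⟨A, B, hAB⟩ := hatR_exp hl (hcdl hk0)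
        refine ⟨A, B, fun x hx => ?_⟩
        have hi' : i = k - 1 := by omega
        rw [hi'] at hx
        rw [Nat.sub_add_cancel hk0] at hx
        rw [hsl hk0 x hx, hAB]
      · rcases Nat.lt_or_ge k i with h2 | h2
        · exact ⟨0, 0, fun x hx => by rw [hz i hi (Or.inr h2) x hx]; simp⟩
        · have hik : i = k := by omega
          subst hik
          obtain ⟨A, B, hAB⟩ := hatL_exp hl (hmono i hi)
          exact ⟨A, B, fun x hx => by rw [hsr hi x hx, hAB]⟩
  -- integrability
  have hpc : ContinuousOn p (Set.Icc (t 0) (t n)) := hp.1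
  have huIcc0 : Set.uIcc (t 0) (t n) = Set.Icc (t 0) (t n) := Set.uIcc_of_le h0n
  have hsub : ∀ i, i < n → Set.uIcc (t i) (t (i+1)) ⊆ Set.Icc (t 0) (t n) := by
    intro i hi
    rw [Set.uIcc_of_le (hmono i hi).le]
    exact Set.Icc_subset_Icc (hknots 0 i (by omega) (by omega))
      (hknots (i+1) n (by omega) le_rfl)
  set G : ℝ → ℝ := fun x => p x * sp x with hG
  set H : ℝ → ℝ := fun x => f x * sp x with hH
  have hGint : ∀ i, i < n → IntervalIntegrable G MeasureTheory.volume (t i) (t (i+1)) := by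
    intro i hi
    exact ((hpc.mono (hsub i hi)).mul hcsp.continuousOn).intervalIntegrable
  have hGint0 : IntervalIntegrable G MeasureTheory.volume (t 0) (t n) := by
    apply ContinuousOn.intervalIntegrable
    rw [huIcc0]; exact hpc.mul hcsp.continuousOn
  have hHint0 : IntervalIntegrable H MeasureTheory.volume (t 0) (t n) := by
    apply ContinuousOn.intervalIntegrable
    rw [huIcc0]; exact hf.mul hcsp.continuousOn
  have hspint : ∀ i, i < n → IntervalIntegrable sp MeasureTheory.volume (t i) (t (i+1)) :=
    fun i hi => hcsp.intervalIntegrable _ _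
  have hspint0 : IntervalIntegrable sp MeasureTheory.volume (t 0) (t n) :=
    hcsp.intervalIntegrable _ _
  -- orthogonality gives ∫ H = ∫ G
  have horth' := horth sp hspline
  unfold ip at horth'
  have hHGeq : (∫ x in (t 0)..(t n), H x) = ∫ x in (t 0)..(t n), G x := by
    have hs : (∫ x in (t 0)..(t n), (f x - p x) * sp x)
        = (∫ x in (t 0)..(t n), H x) - ∫ x in (t 0)..(t n), G x := by
      rw [← intervalIntegral.integral_sub hHint0 hGint0]
      apply intervalIntegral.integral_congr
      intro x _
      simp only [hH, hG]; ring
    rw [hs] at horth'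
    linarith
  -- |∫ H| ≤ ∫ sp
  have hHbound : |∫ x in (t 0)..(t n), H x| ≤ ∫ x in (t 0)..(t n), sp x := by
    calc |∫ x in (t 0)..(t n), H x| ≤ ∫ x in (t 0)..(t n), |H x| :=
          intervalIntegral.abs_integral_le_integral_abs h0n
      _ ≤ ∫ x in (t 0)..(t n), sp x := by
          apply intervalIntegral.integral_mono_on h0n hHint0.abs hspint0
          intro x hx
          simp only [hH, abs_mul, abs_of_nonneg (hsp0 x)]
          calc |f x| * sp x ≤ 1 * sp x :=
                mul_le_mul_of_nonneg_right (hf1 x hx) (hsp0 x)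
            _ = sp x := one_mul _
  -- splittings
  have hGsplit := integral_split G hGint
  have hspsplit := integral_split sp hspint
  -- zero pieces
  have hGzero : ∀ i, i < n → (i + 1 < k ∨ k < i) → (∫ x in (t i)..(t (i+1)), G x) = 0 := by
    intro i hi hcase
    rw [intervalIntegral.integral_congr (g := fun _ => (0:ℝ))
      (fun x hx => by
        rw [Set.uIcc_of_le (hmono i hi).le] at hx
        simp only [hG]
        rw [hz i hi hcase x hx, mul_zero])]
    simp
  have hspzero : ∀ i, i < n → (i + 1 < k ∨ k < i) → (∫ x in (t i)..(t (i+1)), sp x) = 0 := by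
    intro i hi hcase
    rw [intervalIntegral.integral_congr (g := fun _ => (0:ℝ))
      (fun x hx => by
        rw [Set.uIcc_of_le (hmono i hi).le] at hx
        exact hz i hi hcase x hx)]
    simp
  set M := |p (t k)| with hM
  -- the three cases
  rcases Nat.eq_zero_or_pos k with hk0 | hk0
  · -- k = 0 : only the right interval matters
    subst hk0
    have hkn : 0 < n := by omega
    have hcd := hmono 0 hkn
    have hTval : (∫ x in (t 0)..(t n), G x) = p (t 0) * A2 l (t 0) (t 1) + p (t 1) * A3 l (t 0) (t 1) := by
      rw [hGsplit, Finset.sum_eq_single_of_mem 0 (Finset.mem_range.mpr hkn)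
        (fun i hi hne => hGzero i (Finset.mem_range.mp hi) (Or.inr (by omega)))]
      rw [intervalIntegral.integral_congr (g := fun x => p x * hatL l (t 0) (t 1) x)
        (fun x hx => by
          rw [Set.uIcc_of_le hcd.le] at hx
          simp only [hG]
          rw [hsr hkn x hx])]
      obtain ⟨A, B, hAB⟩ := hp.2 0 hkn
      exact int_p_hatL hl hcd p A B hAB
    have hspval : (∫ x in (t 0)..(t n), sp x) = B1 l (t 0) (t 1) := by
      rw [hspsplit, Finset.sum_eq_single_of_mem 0 (Finset.mem_range.mpr hkn)
        (fun i hi hne => hspzero i (Finset.mem_range.mp hi) (Or.inr (by omega)))]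
      rw [intervalIntegral.integral_congr (g := hatL l (t 0) (t 1))
        (fun x hx => by
          rw [Set.uIcc_of_le hcd.le] at hx
          exact hsr hkn x hx)]
      exact intL hl hcd
    refine arith_main M (∫ x in (t 0)..(t n), G x) (p (t 0)) 0 (p (t 1)) 0 0 0
      (B1 l (t 0) (t 1)) (A2 l (t 0) (t 1)) (A3 l (t 0) (t 1)) hM.symm
      (by rw [abs_zero, hM]; exact abs_nonneg _)
      (hkmax 1 (by omega)) (by rw [hTval]; ring) ?_ le_rfl (A3_nonneg hl hcd)
      (by norm_num) (key_ineq hl hcd) le_rfl (B1_pos hl hcd).le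
      (by simpa using B1_pos hl hcd)
    rw [← hHGeq, ← hspval]
    simpa using hHbound
  · rcases eq_or_lt_of_le hk with hkn | hkn
    · -- k = n : only the left interval matters
      have hcd := hcdl hk0
      have hprev : n - 1 + 1 = n := Nat.sub_add_cancel hn
      have hTval : (∫ x in (t 0)..(t n), G x)
          = p (t (k-1)) * A3 l (t (k-1)) (t k) + p (t k) * A2 l (t (k-1)) (t k) := by
        rw [hGsplit, Finset.sum_eq_single_of_mem (k-1) (Finset.mem_range.mpr (by omega))
          (fun i hi hne => hGzero i (Finset.mem_range.mp hi) (Or.inl (by have := Finset.mem_range.mp hi; omega)))]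
        rw [show k - 1 + 1 = k by omega]
        rw [intervalIntegral.integral_congr (g := fun x => p x * hatR l (t (k-1)) (t k) x)
          (fun x hx => by
            rw [Set.uIcc_of_le hcd.le] at hx
            simp only [hG]
            rw [hsl hk0 x hx])]
        obtain ⟨A, B, hAB⟩ := hp.2 (k-1) (by omega)
        rw [show k - 1 + 1 = k by omega] at hAB
        exact int_p_hatR hl hcd p A B hAB
      have hspval : (∫ x in (t 0)..(t n), sp x) = B1 l (t (k-1)) (t k) := by
        rw [hspsplit, Finset.sum_eq_single_of_mem (k-1) (Finset.mem_range.mpr (by omega))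
          (fun i hi hne => hspzero i (Finset.mem_range.mp hi) (Or.inl (by have := Finset.mem_range.mp hi; omega)))]
        rw [show k - 1 + 1 = k by omega]
        rw [intervalIntegral.integral_congr (g := hatR l (t (k-1)) (t k))
          (fun x hx => by
            rw [Set.uIcc_of_le hcd.le] at hx
            exact hsl hk0 x hx)]
        exact intR hl hcd
      refine arith_main M (∫ x in (t 0)..(t n), G x) (p (t k)) (p (t (k-1))) 0
        (B1 l (t (k-1)) (t k)) (A2 l (t (k-1)) (t k)) (A3 l (t (k-1)) (t k)) 0 0 0
        hM.symm (hkmax (k-1) (by omega)) (by rw [abs_zero, hM]; exact abs_nonneg _)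
        (by rw [hTval]; ring) ?_
        (A3_nonneg hl hcd) le_rfl (key_ineq hl hcd) (by norm_num) (B1_pos hl hcd).le le_rfl
        (by simpa using B1_pos hl hcd)
      rw [← hHGeq, ← hspval]
      simpa using hHbound
    · -- 0 < k < n : both intervals
      have hcd1 := hcdl hk0
      have hcd2 := hmono k hkn
      have hk1n : k - 1 < n := by omega
      have hTval : (∫ x in (t 0)..(t n), G x)
          = (p (t (k-1)) * A3 l (t (k-1)) (t k) + p (t k) * A2 l (t (k-1)) (t k))
            + (p (t k) * A2 l (t k) (t (k+1)) + p (t (k+1)) * A3 l (t k) (t (k+1))) := by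
        rw [hGsplit, Finset.sum_eq_add_of_mem (k-1) k (Finset.mem_range.mpr hk1n)
          (Finset.mem_range.mpr hkn) (by omega)
          (fun i hi hne => hGzero i (Finset.mem_range.mp hi) (by omega))]
        congr 1
        · rw [show k - 1 + 1 = k by omega]
          rw [intervalIntegral.integral_congr (g := fun x => p x * hatR l (t (k-1)) (t k) x)
            (fun x hx => by
              rw [Set.uIcc_of_le hcd1.le] at hx
              simp only [hG]
              rw [hsl hk0 x hx])]
          obtain ⟨A, B, hAB⟩ := hp.2 (k-1) (by omega)
          rw [show k - 1 + 1 = k by omega] at hAB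
          exact int_p_hatR hl hcd1 p A B hAB
        · rw [intervalIntegral.integral_congr (g := fun x => p x * hatL l (t k) (t (k+1)) x)
            (fun x hx => by
              rw [Set.uIcc_of_le hcd2.le] at hx
              simp only [hG]
              rw [hsr hkn x hx])]
          obtain ⟨A, B, hAB⟩ := hp.2 k hkn
          exact int_p_hatL hl hcd2 p A B hAB
      have hspval : (∫ x in (t 0)..(t n), sp x)
          = B1 l (t (k-1)) (t k) + B1 l (t k) (t (k+1)) := by
        rw [hspsplit, Finset.sum_eq_add_of_mem (k-1) k (Finset.mem_range.mpr hk1n)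
          (Finset.mem_range.mpr hkn) (by omega)
          (fun i hi hne => hspzero i (Finset.mem_range.mp hi) (by omega))]
        congr 1
        · rw [show k - 1 + 1 = k by omega]
          rw [intervalIntegral.integral_congr (g := hatR l (t (k-1)) (t k))
            (fun x hx => by
              rw [Set.uIcc_of_le hcd1.le] at hx
              exact hsl hk0 x hx)]
          exact intR hl hcd1
        · rw [intervalIntegral.integral_congr (g := hatL l (t k) (t (k+1)))
            (fun x hx => by
              rw [Set.uIcc_of_le hcd2.le] at hx
              exact hsr hkn x hx)]
          exact intL hl hcd2
      refine arith_main M (∫ x in (t 0)..(t n), G x) (p (t k)) (p (t (k-1))) (p (t (k+1)))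
        (B1 l (t (k-1)) (t k)) (A2 l (t (k-1)) (t k)) (A3 l (t (k-1)) (t k))
        (B1 l (t k) (t (k+1))) (A2 l (t k) (t (k+1))) (A3 l (t k) (t (k+1)))
        hM.symm (hkmax (k-1) (by omega)) (hkmax (k+1) (by omega))
        (by rw [hTval]; ring) ?_ (A3_nonneg hl hcd1) (A3_nonneg hl hcd2)
        (key_ineq hl hcd1) (key_ineq hl hcd2) (B1_pos hl hcd1).le (B1_pos hl hcd2).le
        (by have := B1_pos hl hcd1; have := B1_pos hl hcd2; linarith)
      rw [← hHGeq, ← hspval]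
      exact hHbound

/-- The `L²`-orthogonal projector onto the exponential spline space `𝕊(D² − λ², Δ)` has
sup-norm at most `3`, for every partition `Δ`:  if `‖f‖_∞ ≤ 1` and `p` is the orthogonal
projection of `f` (i.e. `p` is a spline with `⟨f − p, s⟩ = 0` for every spline `s`), then
`|p x| ≤ 3` on `[a, b]`. -/
theorem expSpline_projector_le_three (a b l : ℝ) (hab : a < b) (hl : 0 < l)
    (n : ℕ) (hn : 1 ≤ n) (t : ℕ → ℝ) (hmono : ∀ i < n, t i < t (i + 1))
    (h0 : t 0 = a) (hb : t n = b)
    (f : ℝ → ℝ) (hf : ContinuousOn f (Set.Icc a b)) (hf1 : ∀ x ∈ Set.Icc a b, |f x| ≤ 1)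
    (p : ℝ → ℝ) (hp : IsExpSpline l n t p)
    (horth : ∀ s : ℝ → ℝ, IsExpSpline l n t s → ip a b (fun x => f x - p x) s = 0) :
    ∀ x ∈ Set.Icc a b, |p x| ≤ 3 := by
  subst h0 hb
  obtain ⟨k, hkmem, hkmax⟩ := Finset.exists_max_image (Finset.range (n+1))
    (fun i => |p (t i)|) ⟨0, Finset.mem_range.mpr (by omega)⟩
  have hk : k ≤ n := by have := Finset.mem_range.mp hkmem; omega
  have hkmax' : ∀ i, i ≤ n → |p (t i)| ≤ |p (t k)| :=
    fun i hi => hkmax i (Finset.mem_range.mpr (by omega))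
  have hM := core l hl n hn t hmono f hf hf1 p hp horth k hk hkmax'
  intro x hx
  obtain ⟨i, hi, hxi⟩ := cover hn hmono hx
  obtain ⟨A, B, hAB⟩ := hp.2 i hi
  rw [hAB x hxi]
  refine le_trans (exp_sup_bound hl (hmono i hi) A B x hxi) ?_
  rw [← hAB (t i) ⟨le_rfl, (hmono i hi).le⟩, ← hAB (t (i+1)) ⟨(hmono i hi).le, le_rfl⟩]
  exact max_le (le_trans (hkmax' i (by omega)) hM) (le_trans (hkmax' (i+1) (by omega)) hM)
end

section
/- For piecewise linear splines (continuous functions that are affine on each subinterval of a partition Δ of [a,b]), the sup-norm of the L²-orthogonal projector onto this spline space is at most 3, for every partition Δ (Ciesielski's theorem). -/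
/-- `s` is a piecewise linear spline (broken line) on the partition
`t 0 < t 1 < ⋯ < t n`: continuous and affine on each subinterval. -/
def IsLinSpline (n : ℕ) (t : ℕ → ℝ) (s : ℝ → ℝ) : Prop :=
  ContinuousOn s (Set.Icc (t 0) (t n)) ∧
  ∀ i < n, ∃ A B : ℝ, ∀ x ∈ Set.Icc (t i) (t (i + 1)), s x = A * x + B




lemma integ_quad (u v A B C : ℝ) :
    ∫ x in u..v, (A*x^2 + B*x + C) = A*(v^3-u^3)/3 + B*(v^2-u^2)/2 + C*(v-u) := by
  have h : ∀ x : ℝ, HasDerivAt (fun y => A*y^3/3 + B*y^2/2 + C*y) (A*x^2+B*x+C) x := by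
    intro x
    have := ((((hasDerivAt_pow 3 x).const_mul A).div_const 3).add
      (((hasDerivAt_pow 2 x).const_mul B).div_const 2)).add ((hasDerivAt_id x).const_mul C)
    refine this.congr_deriv ?_
    push_cast; ring
  rw [intervalIntegral.integral_eq_sub_of_hasDerivAt (fun x _ => h x)
    ((Continuous.intervalIntegrable (by continuity) u v))]
  ring

lemma ramp_up_prod (u v A B : ℝ) (h : u < v) :
    ∫ x in u..v, (A*x+B) * ((x-u)/(v-u)) = (v-u) * ((A*u+B) + 2*(A*v+B)) / 6 := by
  have hd : v - u ≠ 0 := sub_ne_zero.2 h.ne'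
  have he : ∀ x : ℝ, (A*x+B) * ((x-u)/(v-u))
      = (A/(v-u))*x^2 + ((B-A*u)/(v-u))*x + ((-(B*u))/(v-u)) := by
    intro x; field_simp; ring
  rw [intervalIntegral.integral_congr (g := fun x =>
      (A/(v-u))*x^2 + ((B-A*u)/(v-u))*x + ((-(B*u))/(v-u))) (fun x _ => he x)]
  rw [integ_quad]; field_simp; ring

lemma ramp_down_prod (u v A B : ℝ) (h : u < v) :
    ∫ x in u..v, (A*x+B) * ((v-x)/(v-u)) = (v-u) * (2*(A*u+B) + (A*v+B)) / 6 := by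
  have hd : v - u ≠ 0 := sub_ne_zero.2 h.ne'
  have he : ∀ x : ℝ, (A*x+B) * ((v-x)/(v-u))
      = ((-A)/(v-u))*x^2 + ((A*v-B)/(v-u))*x + ((B*v)/(v-u)) := by
    intro x; field_simp; ring
  rw [intervalIntegral.integral_congr (g := fun x =>
      ((-A)/(v-u))*x^2 + ((A*v-B)/(v-u))*x + ((B*v)/(v-u))) (fun x _ => he x)]
  rw [integ_quad]; field_simp; ring

lemma affine_abs_le (A B u v x : ℝ) (hx : x ∈ Set.Icc u v) :
    |A*x+B| ≤ max |A*u+B| |A*v+B| := by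
  obtain ⟨h1, h2⟩ := hx
  have m1 : |A*u+B| ≤ max |A*u+B| |A*v+B| := le_max_left _ _
  have m2 : |A*v+B| ≤ max |A*u+B| |A*v+B| := le_max_right _ _
  have e1 := le_abs_self (A*u+B); have e2 := le_abs_self (A*v+B)
  have e3 := neg_abs_le (A*u+B); have e4 := neg_abs_le (A*v+B)
  rw [abs_le]
  constructor <;> rcases le_total 0 A with hA | hA
  · nlinarith [mul_le_mul_of_nonneg_left h1 hA]
  · nlinarith [mul_le_mul_of_nonneg_left h2 (neg_nonneg.2 hA)]
  · nlinarith [mul_le_mul_of_nonneg_left h2 hA]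
  · nlinarith [mul_le_mul_of_nonneg_left h1 (neg_nonneg.2 hA)]

noncomputable def hat (n i : ℕ) (t : ℕ → ℝ) (x : ℝ) : ℝ :=
  max 0 (min (if i = 0 then 1 else (x - t (i-1)) / (t i - t (i-1)))
             (if i = n then 1 else (t (i+1) - x) / (t (i+1) - t i)))

lemma hat_nonneg (n i : ℕ) (t : ℕ → ℝ) (x : ℝ) : 0 ≤ hat n i t x := le_max_left _ _

lemma hat_cont (n i : ℕ) (t : ℕ → ℝ) : Continuous (hat n i t) := by
  unfold hat
  apply continuous_const.max
  apply Continuous.min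
  · by_cases h : i = 0
    · simp only [if_pos h]; exact continuous_const
    · simp only [if_neg h]; exact (continuous_id.sub continuous_const).div_const _
  · by_cases h : i = n
    · simp only [if_pos h]; exact continuous_const
    · simp only [if_neg h]; exact (continuous_const.sub continuous_id).div_const _

lemma t_mono (n : ℕ) (t : ℕ → ℝ) (hmono : ∀ i < n, t i < t (i+1)) :
    ∀ j k, j ≤ k → k ≤ n → t j ≤ t k := by
  intro j k hjk hkn
  induction k with
  | zero => cases Nat.le_zero.mp hjk; exact le_rfl
  | succ m ih =>
    rcases Nat.lt_or_ge j (m+1) with h | h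
    · exact (ih (by omega) (by omega)).trans (hmono m (by omega)).le
    · have hjm : j = m + 1 := by omega
      rw [hjm]

lemma hat_eq_up (n i : ℕ) (t : ℕ → ℝ) (hi1 : 1 ≤ i) (hin : i ≤ n)
    (hmono : ∀ j < n, t j < t (j+1)) (x : ℝ) (hx : x ∈ Set.Icc (t (i-1)) (t i)) :
    hat n i t x = (x - t (i-1)) / (t i - t (i-1)) := by
  obtain ⟨hx1, hx2⟩ := hx
  have hi0 : i ≠ 0 := by omega
  have hne : i - 1 + 1 = i := by omega
  have hpos : 0 < t i - t (i-1) := by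
    have := hmono (i-1) (by omega); rw [hne] at this; linarith
  have h1 : 0 ≤ (x - t (i-1)) / (t i - t (i-1)) := div_nonneg (by linarith) hpos.le
  have h2 : (x - t (i-1)) / (t i - t (i-1)) ≤ 1 := (div_le_one hpos).2 (by linarith)
  have hsec : (1:ℝ) ≤ (if i = n then 1 else (t (i+1) - x) / (t (i+1) - t i)) := by
    split_ifs with h
    · exact le_rfl
    · have hlt := hmono i (by omega)
      exact (one_le_div (by linarith)).2 (by linarith)
  unfold hat
  rw [if_neg hi0, min_eq_left (h2.trans hsec), max_eq_right h1]

lemma hat_eq_down (n i : ℕ) (t : ℕ → ℝ) (hin : i < n)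
    (hmono : ∀ j < n, t j < t (j+1)) (x : ℝ) (hx : x ∈ Set.Icc (t i) (t (i+1))) :
    hat n i t x = (t (i+1) - x) / (t (i+1) - t i) := by
  obtain ⟨hx1, hx2⟩ := hx
  have hpos : 0 < t (i+1) - t i := by have := hmono i hin; linarith
  have h1 : 0 ≤ (t (i+1) - x) / (t (i+1) - t i) := div_nonneg (by linarith) hpos.le
  have h2 : (t (i+1) - x) / (t (i+1) - t i) ≤ 1 := (div_le_one hpos).2 (by linarith)
  have hfst : (1:ℝ) ≤ (if i = 0 then 1 else (x - t (i-1)) / (t i - t (i-1))) := by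
    split_ifs with h
    · exact le_rfl
    · have hne : i - 1 + 1 = i := by omega
      have hlt := hmono (i-1) (by omega); rw [hne] at hlt
      exact (one_le_div (by linarith)).2 (by linarith)
  unfold hat
  rw [if_neg (by omega : ¬ i = n), min_eq_right (h2.trans hfst), max_eq_right h1]

lemma hat_eq_zero_left (n i : ℕ) (t : ℕ → ℝ) (hi1 : 1 ≤ i) (hin : i ≤ n)
    (hmono : ∀ j < n, t j < t (j+1)) (x : ℝ) (hx : x ≤ t (i-1)) :
    hat n i t x = 0 := by
  have hi0 : i ≠ 0 := by omega
  have hne : i - 1 + 1 = i := by omega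
  have hpos : 0 < t i - t (i-1) := by
    have := hmono (i-1) (by omega); rw [hne] at this; linarith
  have h1 : (x - t (i-1)) / (t i - t (i-1)) ≤ 0 := div_nonpos_of_nonpos_of_nonneg (by linarith) hpos.le
  unfold hat
  rw [if_neg hi0]
  exact max_eq_left ((min_le_left _ _).trans h1)

lemma hat_eq_zero_right (n i : ℕ) (t : ℕ → ℝ) (hin : i < n)
    (hmono : ∀ j < n, t j < t (j+1)) (x : ℝ) (hx : t (i+1) ≤ x) :
    hat n i t x = 0 := by
  have hpos : 0 < t (i+1) - t i := by have := hmono i hin; linarith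
  have h1 : (t (i+1) - x) / (t (i+1) - t i) ≤ 0 := div_nonpos_of_nonpos_of_nonneg (by linarith) hpos.le
  unfold hat
  rw [if_neg (by omega : ¬ i = n)]
  exact max_eq_left ((min_le_right _ _).trans h1)

lemma exists_piece (n : ℕ) (hn : 1 ≤ n) (t : ℕ → ℝ) (x : ℝ) (hx : x ∈ Set.Icc (t 0) (t n)) :
    ∃ j < n, x ∈ Set.Icc (t j) (t (j+1)) := by
  induction n with
  | zero => omega
  | succ m ih =>
    rcases Nat.eq_zero_or_pos m with hm | hm
    · subst hm; exact ⟨0, by omega, hx⟩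
    · rcases le_total x (t m) with h | h
      · obtain ⟨j, hj, hj2⟩ := ih hm ⟨hx.1, h⟩
        exact ⟨j, by omega, hj2⟩
      · exact ⟨m, by omega, ⟨h, hx.2⟩⟩

lemma final_boundary (h c d F : ℝ) (hpos : 0 < h)
    (hE : F = h*(2*c+d)/6) (hB1 : -(h/2) ≤ F) (hB2 : F ≤ h/2)
    (hd1 : d ≤ |c|) (hd2 : -|c| ≤ d) : |c| ≤ 3 := by
  rcases abs_cases c with ⟨he, hc⟩ | ⟨he, hc⟩ <;> rw [he] at hd1 hd2 ⊢
  · nlinarith [mul_nonneg hpos.le (by linarith : 0 ≤ d + c)]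
  · nlinarith [mul_nonneg hpos.le (by linarith : 0 ≤ -(d + c))]

lemma final_interior (h1 h2 cm c cp F1 F2 : ℝ) (hpos1 : 0 < h1) (hpos2 : 0 < h2)
    (hE : F1 + F2 = h1*(cm+2*c)/6 + h2*(2*c+cp)/6)
    (hB11 : -(h1/2) ≤ F1) (hB12 : F1 ≤ h1/2) (hB21 : -(h2/2) ≤ F2) (hB22 : F2 ≤ h2/2)
    (hcm1 : cm ≤ |c|) (hcm2 : -|c| ≤ cm) (hcp1 : cp ≤ |c|) (hcp2 : -|c| ≤ cp) :
    |c| ≤ 3 := by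
  rcases abs_cases c with ⟨he, hc⟩ | ⟨he, hc⟩ <;> rw [he] at hcm1 hcm2 hcp1 hcp2 ⊢
  · nlinarith [mul_nonneg hpos1.le (by linarith : 0 ≤ cm + c),
      mul_nonneg hpos2.le (by linarith : 0 ≤ cp + c)]
  · nlinarith [mul_nonneg hpos1.le (by linarith : 0 ≤ -(cm + c)),
      mul_nonneg hpos2.le (by linarith : 0 ≤ -(cp + c))]

open MeasureTheory


/-- Ciesielski's theorem: the `L²`-orthogonal projector onto the space of continuous
piecewise linear splines has sup-norm at most `3`, for every partition. -/
theorem linSpline_projector_le_three (a b : ℝ) (hab : a < b)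
    (n : ℕ) (hn : 1 ≤ n) (t : ℕ → ℝ) (hmono : ∀ i < n, t i < t (i + 1))
    (h0 : t 0 = a) (hb : t n = b)
    (f : ℝ → ℝ) (hf : ContinuousOn f (Set.Icc a b)) (hf1 : ∀ x ∈ Set.Icc a b, |f x| ≤ 1)
    (p : ℝ → ℝ) (hp : IsLinSpline n t p)
    (horth : ∀ s : ℝ → ℝ, IsLinSpline n t s → ip a b (fun x => f x - p x) s = 0) :
    ∀ x ∈ Set.Icc a b, |p x| ≤ 3 := by
  subst h0; subst hb
  have tm := t_mono n t hmono
  obtain ⟨i, hi_mem, hi_max⟩ := Finset.exists_max_image (Finset.range (n+1))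
    (fun j => |p (t j)|) ⟨0, by simp⟩
  set M := |p (t i)| with hMdef
  have hin : i ≤ n := by have := Finset.mem_range.mp hi_mem; omega
  have hMj : ∀ j ≤ n, |p (t j)| ≤ M := fun j hj => hi_max j (Finset.mem_range.mpr (by omega))
  suffices hM3 : M ≤ 3 by
    intro x hx
    obtain ⟨j, hj, hxj⟩ := exists_piece n hn t x hx
    obtain ⟨A, B, hAB⟩ := hp.2 j hj
    have hje1 : t j ∈ Set.Icc (t j) (t (j+1)) := ⟨le_rfl, (hmono j hj).le⟩
    have hje2 : t (j+1) ∈ Set.Icc (t j) (t (j+1)) := ⟨(hmono j hj).le, le_rfl⟩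
    calc |p x| = |A*x+B| := by rw [hAB x hxj]
      _ ≤ max |A*(t j)+B| |A*(t (j+1))+B| := affine_abs_le A B _ _ x hxj
      _ ≤ M := max_le (by rw [← hAB (t j) hje1]; exact hMj j (by omega))
            (by rw [← hAB (t (j+1)) hje2]; exact hMj (j+1) (by omega))
      _ ≤ 3 := hM3
  -- setup
  set φ := hat n i t with hφdef
  have hφ : IsLinSpline n t φ := by
    refine ⟨(hat_cont n i t).continuousOn, ?_⟩
    intro j hj
    by_cases h1 : j + 1 = i
    · have hij : i - 1 = j := by omega
      refine ⟨1/(t i - t (i-1)), -(t (i-1))/(t i - t (i-1)), fun x hx => ?_⟩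
      have hx' : x ∈ Set.Icc (t (i-1)) (t i) := by rw [hij, ← h1]; exact hx
      rw [hφdef, hat_eq_up n i t (by omega) (by omega) hmono x hx']
      ring
    · by_cases h2 : j = i
      · refine ⟨-(1/(t (i+1) - t i)), t (i+1)/(t (i+1) - t i), fun x hx => ?_⟩
        have hx' : x ∈ Set.Icc (t i) (t (i+1)) := by rw [← h2]; exact hx
        rw [hφdef, hat_eq_down n i t (by omega) hmono x hx']
        ring
      · refine ⟨0, 0, fun x hx => ?_⟩
        rw [zero_mul, zero_add, hφdef]
        rcases Nat.lt_or_ge (j+1) i with h | h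
        · exact hat_eq_zero_left n i t (by omega) hin hmono x
            (hx.2.trans (tm (j+1) (i-1) (by omega) (by omega)))
        · exact hat_eq_zero_right n i t (by omega) hmono x
            ((tm (i+1) j (by omega) (by omega)).trans hx.1)
  have hab' : t 0 ≤ t n := hab.le
  have hIcc : Set.uIcc (t 0) (t n) = Set.Icc (t 0) (t n) := Set.uIcc_of_le hab'
  have hφc : Continuous φ := hat_cont n i t
  have hpc : ContinuousOn p (Set.Icc (t 0) (t n)) := hp.1
  have hfφ : IntervalIntegrable (fun x => f x * φ x) volume (t 0) (t n) := by
    apply ContinuousOn.intervalIntegrable; rw [hIcc]; exact hf.mul hφc.continuousOn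
  have hpφ : IntervalIntegrable (fun x => p x * φ x) volume (t 0) (t n) := by
    apply ContinuousOn.intervalIntegrable; rw [hIcc]; exact hpc.mul hφc.continuousOn
  have horth' : ∫ x in (t 0)..(t n), (f x - p x) * φ x = 0 := horth φ hφ
  have hsplit : ∫ x in (t 0)..(t n), (f x - p x) * φ x
      = (∫ x in (t 0)..(t n), f x * φ x) - ∫ x in (t 0)..(t n), p x * φ x := by
    rw [← intervalIntegral.integral_sub hfφ hpφ]
    congr 1; ext x; ring
  have key : (∫ x in (t 0)..(t n), f x * φ x) = ∫ x in (t 0)..(t n), p x * φ x := by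
    rw [hsplit] at horth'; linarith
  -- pieces
  have hsub : ∀ j < n, Set.Icc (t j) (t (j+1)) ⊆ Set.Icc (t 0) (t n) := fun j hj =>
    Set.Icc_subset_Icc (tm 0 j (by omega) (by omega)) (tm (j+1) n (by omega) le_rfl)
  have hint : ∀ (g : ℝ → ℝ), ContinuousOn g (Set.Icc (t 0) (t n)) →
      ∀ j < n, IntervalIntegrable g volume (t j) (t (j+1)) := by
    intro g hg j hj
    apply ContinuousOn.intervalIntegrable
    rw [Set.uIcc_of_le (hmono j hj).le]
    exact hg.mono (hsub j hj)
  have hdecomp : ∀ (g : ℝ → ℝ), ContinuousOn g (Set.Icc (t 0) (t n)) →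
      (∫ x in (t 0)..(t n), g x) = ∑ j ∈ Finset.range n, ∫ x in (t j)..(t (j+1)), g x :=
    fun g hg => (intervalIntegral.sum_integral_adjacent_intervals
      (fun k hk => hint g hg k hk)).symm
  have hzero : ∀ (g : ℝ → ℝ) (j : ℕ), j < n → j ≠ i → j + 1 ≠ i →
      (∫ x in (t j)..(t (j+1)), g x * φ x) = 0 := by
    intro g j hj hji hji'
    have hz : ∀ x ∈ Set.uIcc (t j) (t (j+1)), g x * φ x = (fun _ => (0:ℝ)) x := by
      intro x hx
      rw [Set.uIcc_of_le (hmono j hj).le] at hx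
      have : φ x = 0 := by
        rcases Nat.lt_or_ge (j+1) i with h | h
        · exact hat_eq_zero_left n i t (by omega) hin hmono x
            (hx.2.trans (tm (j+1) (i-1) (by omega) (by omega)))
        · exact hat_eq_zero_right n i t (by omega) hmono x
            ((tm (i+1) j (by omega) (by omega)).trans hx.1)
      simp [this]
    rw [intervalIntegral.integral_congr hz, intervalIntegral.integral_const, smul_zero]
  -- adjacent piece values
  have hii : i ≠ 0 → i - 1 + 1 = i := by omega
  have hup : 1 ≤ i → (∫ x in (t (i-1))..(t i), p x * φ x)
      = (t i - t (i-1)) * (p (t (i-1)) + 2 * p (t i)) / 6 := by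
    intro h1
    obtain ⟨A, B, hAB⟩ := hp.2 (i-1) (by omega)
    rw [hii (by omega)] at hAB
    have hlt : t (i-1) < t i := by
      have := hmono (i-1) (by omega); rwa [hii (by omega)] at this
    have hcg : ∀ x ∈ Set.uIcc (t (i-1)) (t i),
        p x * φ x = (fun y => (A*y+B) * ((y - t (i-1))/(t i - t (i-1)))) x := by
      intro x hx
      rw [Set.uIcc_of_le hlt.le] at hx
      rw [hφdef, hAB x hx, hat_eq_up n i t h1 hin hmono x hx]
    rw [intervalIntegral.integral_congr hcg, ramp_up_prod _ _ _ _ hlt,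
      ← hAB (t (i-1)) ⟨le_rfl, hlt.le⟩, ← hAB (t i) ⟨hlt.le, le_rfl⟩]
  have hdown : i < n → (∫ x in (t i)..(t (i+1)), p x * φ x)
      = (t (i+1) - t i) * (2 * p (t i) + p (t (i+1))) / 6 := by
    intro h1
    obtain ⟨A, B, hAB⟩ := hp.2 i h1
    have hlt : t i < t (i+1) := hmono i h1
    have hcg : ∀ x ∈ Set.uIcc (t i) (t (i+1)),
        p x * φ x = (fun y => (A*y+B) * ((t (i+1) - y)/(t (i+1) - t i))) x := by
      intro x hx
      rw [Set.uIcc_of_le hlt.le] at hx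
      rw [hφdef, hAB x hx, hat_eq_down n i t h1 hmono x hx]
    rw [intervalIntegral.integral_congr hcg, ramp_down_prod _ _ _ _ hlt,
      ← hAB (t i) ⟨le_rfl, hlt.le⟩, ← hAB (t (i+1)) ⟨hlt.le, le_rfl⟩]
  have hupφ : 1 ≤ i → (∫ x in (t (i-1))..(t i), φ x) = (t i - t (i-1)) / 2 := by
    intro h1
    have hlt : t (i-1) < t i := by
      have := hmono (i-1) (by omega); rwa [hii (by omega)] at this
    have hcg : ∀ x ∈ Set.uIcc (t (i-1)) (t i),
        φ x = (fun y => ((0:ℝ)*y+1) * ((y - t (i-1))/(t i - t (i-1)))) x := by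
      intro x hx
      rw [Set.uIcc_of_le hlt.le] at hx
      rw [hφdef, hat_eq_up n i t h1 hin hmono x hx]
      ring
    rw [intervalIntegral.integral_congr hcg, ramp_up_prod _ _ _ _ hlt]
    ring
  have hdownφ : i < n → (∫ x in (t i)..(t (i+1)), φ x) = (t (i+1) - t i) / 2 := by
    intro h1
    have hlt : t i < t (i+1) := hmono i h1
    have hcg : ∀ x ∈ Set.uIcc (t i) (t (i+1)),
        φ x = (fun y => ((0:ℝ)*y+1) * ((t (i+1) - y)/(t (i+1) - t i))) x := by
      intro x hx
      rw [Set.uIcc_of_le hlt.le] at hx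
      rw [hφdef, hat_eq_down n i t h1 hmono x hx]
      ring
    rw [intervalIntegral.integral_congr hcg, ramp_down_prod _ _ _ _ hlt]
    ring
  -- f bounds on pieces
  have hfbound : ∀ j < n, |∫ x in (t j)..(t (j+1)), f x * φ x| ≤ ∫ x in (t j)..(t (j+1)), φ x := by
    intro j hj
    have hlt := hmono j hj
    have h1 : |∫ x in (t j)..(t (j+1)), f x * φ x| ≤ ∫ x in (t j)..(t (j+1)), |f x * φ x| :=
      intervalIntegral.abs_integral_le_integral_abs hlt.le
    have h2 : (∫ x in (t j)..(t (j+1)), |f x * φ x|) ≤ ∫ x in (t j)..(t (j+1)), φ x := by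
      apply intervalIntegral.integral_mono_on hlt.le
        ((hint (fun x => f x * φ x) (hf.mul hφc.continuousOn) j hj).abs)
        (hint φ hφc.continuousOn j hj)
      intro x hx
      have hx' := hsub j hj hx
      calc |f x * φ x| = |f x| * φ x := by
            rw [abs_mul, abs_of_nonneg (hat_nonneg n i t x)]
        _ ≤ 1 * φ x := mul_le_mul_of_nonneg_right (hf1 x hx') (hat_nonneg n i t x)
        _ = φ x := one_mul _
    linarith
  -- Now case analysis on i
  have hM0 : 0 ≤ M := abs_nonneg _
  rcases Nat.eq_zero_or_pos i with hi0 | hi1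
  · -- boundary i = 0
    subst hi0
    have h1n : (0:ℕ) < n := by omega
    have hlt : t 0 < t 1 := hmono 0 h1n
    have hsump : (∫ x in (t 0)..(t n), p x * φ x) = ∫ x in (t 0)..(t 1), p x * φ x := by
      rw [hdecomp (fun x => p x * φ x) (hpc.mul hφc.continuousOn)]
      exact Finset.sum_eq_single_of_mem 0 (Finset.mem_range.mpr h1n)
        (fun j hj hj0 => hzero p j (Finset.mem_range.mp hj) hj0 (by omega))
    have hsumf : (∫ x in (t 0)..(t n), f x * φ x) = ∫ x in (t 0)..(t 1), f x * φ x := by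
      rw [hdecomp (fun x => f x * φ x) (hf.mul hφc.continuousOn)]
      exact Finset.sum_eq_single_of_mem 0 (Finset.mem_range.mpr h1n)
        (fun j hj hj0 => hzero f j (Finset.mem_range.mp hj) hj0 (by omega))
    have hE : (∫ x in (t 0)..(t 1), f x * φ x)
        = (t 1 - t 0) * (2 * p (t 0) + p (t 1)) / 6 := by
      rw [← hsumf, key, hsump]; exact hdown h1n
    have hB : |∫ x in (t 0)..(t 1), f x * φ x| ≤ (t 1 - t 0) / 2 := by
      have := hfbound 0 h1n
      rw [hdownφ h1n] at this; exact this
    rw [hE] at hB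
    obtain ⟨hB1, hB2⟩ := abs_le.mp hB
    rw [hMdef] at hMj ⊢
    have hc1 : p (t 1) ≤ |p (t 0)| := (le_abs_self _).trans (hMj 1 (by omega))
    have hc2 : -|p (t 0)| ≤ p (t 1) := by
      have := neg_abs_le (p (t 1)); have := hMj 1 (by omega); linarith
    have hpos : 0 < t 1 - t 0 := by linarith
    exact final_boundary _ _ _ _ hpos rfl hB1 hB2 hc1 hc2
  · by_cases hiN : i = n
    · -- boundary i = n
      have h1i : 1 ≤ i := hi1
      have hlt : t (i-1) < t i := by
        have := hmono (i-1) (by omega); rwa [hii (by omega)] at this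
      have hmem : i - 1 ∈ Finset.range n := Finset.mem_range.mpr (by omega)
      have hsump : (∫ x in (t 0)..(t n), p x * φ x) = ∫ x in (t (i-1))..(t i), p x * φ x := by
        rw [hdecomp (fun x => p x * φ x) (hpc.mul hφc.continuousOn)]
        rw [show (∫ x in (t (i-1))..(t i), p x * φ x)
          = ∫ x in (t (i-1))..(t (i-1+1)), p x * φ x by rw [hii (by omega)]]
        refine Finset.sum_eq_single_of_mem (i-1) hmem ?_
        intro j hj hj0
        have hjn := Finset.mem_range.mp hj
        exact hzero p j hjn (by omega) (by omega)
      have hsumf : (∫ x in (t 0)..(t n), f x * φ x) = ∫ x in (t (i-1))..(t i), f x * φ x := by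
        rw [hdecomp (fun x => f x * φ x) (hf.mul hφc.continuousOn)]
        rw [show (∫ x in (t (i-1))..(t i), f x * φ x)
          = ∫ x in (t (i-1))..(t (i-1+1)), f x * φ x by rw [hii (by omega)]]
        refine Finset.sum_eq_single_of_mem (i-1) hmem ?_
        intro j hj hj0
        have hjn := Finset.mem_range.mp hj
        exact hzero f j hjn (by omega) (by omega)
      have hE : (∫ x in (t (i-1))..(t i), f x * φ x)
          = (t i - t (i-1)) * (p (t (i-1)) + 2 * p (t i)) / 6 := by
        rw [← hsumf, key, hsump]; exact hup h1i
      have hB : |∫ x in (t (i-1))..(t i), f x * φ x| ≤ (t i - t (i-1)) / 2 := by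
        have := hfbound (i-1) (by omega)
        rw [hii (by omega)] at this
        rw [hupφ h1i] at this; exact this
      rw [hE] at hB
      obtain ⟨hB1, hB2⟩ := abs_le.mp hB
      rw [hMdef] at hMj ⊢
      have hc1 : p (t (i-1)) ≤ |p (t i)| := (le_abs_self _).trans (hMj (i-1) (by omega))
      have hc2 : -|p (t i)| ≤ p (t (i-1)) := by
        have := neg_abs_le (p (t (i-1))); have := hMj (i-1) (by omega); linarith
      have hpos : 0 < t i - t (i-1) := by linarith
      exact final_boundary _ _ _ _ hpos (by linarith) hB1 hB2 hc1 hc2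
    · -- interior
      have h1i : 1 ≤ i := hi1
      have hiltn : i < n := by omega
      have hlt1 : t (i-1) < t i := by
        have := hmono (i-1) (by omega); rwa [hii (by omega)] at this
      have hlt2 : t i < t (i+1) := hmono i hiltn
      have hpair : ({i-1, i} : Finset ℕ) ⊆ Finset.range n := by
        intro x hx; simp only [Finset.mem_insert, Finset.mem_singleton] at hx
        rcases hx with h | h <;> simp [Finset.mem_range] <;> omega
      have hsum2 : ∀ (g : ℝ → ℝ), ContinuousOn g (Set.Icc (t 0) (t n)) →
          (∫ x in (t 0)..(t n), g x * φ x)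
          = (∫ x in (t (i-1))..(t i), g x * φ x) + ∫ x in (t i)..(t (i+1)), g x * φ x := by
        intro g hg
        rw [hdecomp (fun x => g x * φ x) (hg.mul hφc.continuousOn)]
        rw [← Finset.sum_subset hpair (fun j hj hj' => by
          simp only [Finset.mem_insert, Finset.mem_singleton, not_or] at hj'
          exact hzero g j (Finset.mem_range.mp hj) hj'.2 (by omega))]
        rw [Finset.sum_pair (by omega : i - 1 ≠ i), hii (by omega)]
      have hE : (∫ x in (t (i-1))..(t i), f x * φ x) + (∫ x in (t i)..(t (i+1)), f x * φ x)
          = (t i - t (i-1)) * (p (t (i-1)) + 2 * p (t i)) / 6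
          + (t (i+1) - t i) * (2 * p (t i) + p (t (i+1))) / 6 := by
        rw [← hsum2 f hf, key, hsum2 p hpc, hup h1i, hdown hiltn]
      have hB1 : |∫ x in (t (i-1))..(t i), f x * φ x| ≤ (t i - t (i-1)) / 2 := by
        have := hfbound (i-1) (by omega)
        rw [hii (by omega)] at this
        rw [hupφ h1i] at this; exact this
      have hB2 : |∫ x in (t i)..(t (i+1)), f x * φ x| ≤ (t (i+1) - t i) / 2 := by
        have := hfbound i hiltn
        rw [hdownφ hiltn] at this; exact this
      obtain ⟨hB11, hB12⟩ := abs_le.mp hB1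
      obtain ⟨hB21, hB22⟩ := abs_le.mp hB2
      rw [hMdef] at hMj ⊢
      have hcm1 : p (t (i-1)) ≤ |p (t i)| := (le_abs_self _).trans (hMj (i-1) (by omega))
      have hcm2 : -|p (t i)| ≤ p (t (i-1)) := by
        have := neg_abs_le (p (t (i-1))); have := hMj (i-1) (by omega); linarith
      have hcp1 : p (t (i+1)) ≤ |p (t i)| := (le_abs_self _).trans (hMj (i+1) (by omega))
      have hcp2 : -|p (t i)| ≤ p (t (i+1)) := by
        have := neg_abs_le (p (t (i+1))); have := hMj (i+1) (by omega); linarith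
      have hpos1 : 0 < t i - t (i-1) := by linarith
      have hpos2 : 0 < t (i+1) - t i := by linarith
      exact final_interior _ _ _ _ _ _ _ hpos1 hpos2 hE hB11 hB12 hB21 hB22 hcm1 hcm2 hcp1 hcp2
end
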